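/- arXiv:1908.07398 — 13 statements merged into one kernel-verified Lean document; each statement's English description precedes it below -/
import Mathlib

section
/- Let A : H1 → H2 be a nonzero bounded linear operator between real Hilbert spaces. Then the range of A is closed if and only if the range of A*A is closed, and in that case |A| = √(|A*A|). -/
open scoped RealInnerProductSpace

noncomputable def minNorm {H1 H2 : Type*} [NormedAddCommGroup H1] [InnerProductSpace ℝ H1]
    [NormedAddCommGroup H2] [InnerProductSpace ℝ H2] (A : H1 →L[ℝ] H2) : ℝ :=
  sInf ((fun x => ‖A x‖) '' {x : H1 | x ∈ (LinearMap.ker (A : H1 →ₗ[ℝ] H2))ᗮ ∧ ‖x‖ = 1})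

/-!
Write `c = minNorm A` and `K = (ker A)ᗮ`. On `K` the operator `D = A†A - c²` satisfies
`⟪D x, x⟫ = ‖A x‖² - c²‖x‖² ≥ 0` and maps `K` into itself, so Cauchy–Schwarz for the semi-inner
product `⟪D ·, ·⟫` on `K` gives `‖D x‖² ≤ ‖D‖ ⟪D x, x⟫`. Along a minimizing sequence of unit
vectors for `c` the right side tends to `0`: these are approximate eigenvectors of `A†A` for `c²`.
Together with `c² ≤ ‖A x‖² = ⟪A†A x, x⟫ ≤ ‖A†A x‖` this gives `minNorm (A†A) = c²`.
For a nonzero operator, the open mapping theorem makes closed range equivalent to being bounded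
below on `(ker A)ᗮ`, i.e. to `0 < minNorm`; as `A†A ≠ 0`, the two ranges are closed together.
-/

open Filter Topology ContinuousLinearMap

section MinNorm

variable {E F : Type*} [NormedAddCommGroup E] [InnerProductSpace ℝ E]
  [NormedAddCommGroup F] [InnerProductSpace ℝ F] (B : E →L[ℝ] F)

lemma bddBelow_minNorm_set :
    BddBelow ((fun x => ‖B x‖) '' {x : E | x ∈ B.kerᗮ ∧ ‖x‖ = 1}) :=
  ⟨0, by rintro _ ⟨x, -, rfl⟩; exact norm_nonneg _⟩

lemma minNorm_nonneg : 0 ≤ minNorm B :=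
  Real.sInf_nonneg (by rintro _ ⟨x, -, rfl⟩; exact norm_nonneg _)

lemma minNorm_le_norm_apply {x : E} (hx : x ∈ B.kerᗮ) (hx1 : ‖x‖ = 1) : minNorm B ≤ ‖B x‖ :=
  csInf_le (bddBelow_minNorm_set B) ⟨x, ⟨hx, hx1⟩, rfl⟩

lemma minNorm_mul_norm_le {x : E} (hx : x ∈ B.kerᗮ) : minNorm B * ‖x‖ ≤ ‖B x‖ := by
  rcases eq_or_ne x 0 with rfl | hx0
  · simp
  have hpos : 0 < ‖x‖ := norm_pos_iff.2 hx0
  have h := minNorm_le_norm_apply B (B.kerᗮ.smul_mem ‖x‖⁻¹ hx)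
    (by rw [norm_smul, norm_inv, norm_norm, inv_mul_cancel₀ hpos.ne'])
  rwa [map_smul, norm_smul, norm_inv, norm_norm, le_inv_mul_iff₀ hpos, mul_comm] at h

lemma le_minNorm {c : ℝ} (hne : ∃ x ∈ B.kerᗮ, ‖x‖ = 1)
    (h : ∀ x ∈ B.kerᗮ, ‖x‖ = 1 → c ≤ ‖B x‖) : c ≤ minNorm B := by
  obtain ⟨x, hx, hx1⟩ := hne
  exact le_csInf ⟨‖B x‖, x, ⟨hx, hx1⟩, rfl⟩ (by rintro _ ⟨y, ⟨hy, hy1⟩, rfl⟩; exact h y hy hy1)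

lemma minNorm_eq_zero (h : ¬∃ x ∈ B.kerᗮ, ‖x‖ = 1) : minNorm B = 0 := by
  have : {x : E | x ∈ B.kerᗮ ∧ ‖x‖ = 1} = ∅ := by
    ext x; simpa using fun hx => (h ⟨x, hx, ·⟩)
  rw [minNorm, this, Set.image_empty, Real.sInf_empty]

lemma exists_seq_tendsto_minNorm (hne : ∃ x ∈ B.kerᗮ, ‖x‖ = 1) :
    ∃ u : ℕ → E, (∀ n, u n ∈ B.kerᗮ ∧ ‖u n‖ = 1) ∧
      Tendsto (fun n => ‖B (u n)‖) atTop (𝓝 (minNorm B)) := by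
  obtain ⟨x, hx, hx1⟩ := hne
  obtain ⟨a, -, ha, haS⟩ := exists_seq_tendsto_sInf
    (S := (fun x => ‖B x‖) '' {x : E | x ∈ B.kerᗮ ∧ ‖x‖ = 1}) ⟨‖B x‖, x, ⟨hx, hx1⟩, rfl⟩
    (bddBelow_minNorm_set B)
  choose u hu hua using haS
  exact ⟨u, hu, by rw [funext hua]; exact ha⟩

lemma exists_mem_orthogonal_ker_norm_eq_one [CompleteSpace E] (hB : B ≠ 0) :
    ∃ x ∈ B.kerᗮ, ‖x‖ = 1 := by
  have : B.kerᗮ ≠ ⊥ := by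
    rw [Ne, Submodule.orthogonal_eq_bot_iff]
    exact fun h => hB (ext fun x => (h ▸ Submodule.mem_top : x ∈ B.ker))
  obtain ⟨x, hx, hx0⟩ := (Submodule.ne_bot_iff _).1 this
  exact ⟨‖x‖⁻¹ • x, B.kerᗮ.smul_mem _ hx, norm_smul_inv_norm hx0⟩

lemma range_comp_subtypeL_orthogonal_ker [CompleteSpace E] :
    Set.range (B ∘L B.kerᗮ.subtypeL) = Set.range B := by
  refine subset_antisymm (by rintro _ ⟨z, rfl⟩; exact ⟨z, rfl⟩) ?_
  rintro _ ⟨x, rfl⟩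
  obtain ⟨k, hk, z, hz, rfl⟩ := B.ker.exists_add_mem_mem_orthogonal x
  have hk : B k = 0 := hk
  exact ⟨⟨z, hz⟩, by simp [hk]⟩

lemma injective_comp_subtypeL_orthogonal_ker :
    Function.Injective (B ∘L B.kerᗮ.subtypeL) := by
  refine (injective_iff_map_eq_zero _).2 fun z hz => ?_
  exact Subtype.ext <| B.ker.orthogonal_disjoint.le_bot ⟨hz, z.2⟩

lemma isClosed_range_iff_minNorm_pos [CompleteSpace E] [CompleteSpace F] (hB : B ≠ 0) :
    IsClosed (Set.range B) ↔ 0 < minNorm B := by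
  have : CompleteSpace B.kerᗮ := B.ker.isClosed_orthogonal.completeSpace_coe
  rw [← range_comp_subtypeL_orthogonal_ker, isClosed_range_iff_antilipschitz_of_injective _
    (injective_comp_subtypeL_orthogonal_ker B)]
  constructor
  · rintro ⟨C, hC⟩
    obtain ⟨x, hx, hx1⟩ := exists_mem_orthogonal_ker_norm_eq_one B hB
    have hbound : ∀ y ∈ B.kerᗮ, ‖y‖ = 1 → 1 ≤ C * ‖B y‖ := fun y hy hy1 =>
      hy1 ▸ (B ∘L B.kerᗮ.subtypeL).bound_of_antilipschitz hC ⟨y, hy⟩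
    have hC0 : 0 < (C : ℝ) :=
      pos_of_mul_pos_left (one_pos.trans_le (hbound x hx hx1)) (norm_nonneg _)
    refine (inv_pos.2 hC0).trans_le (le_minNorm B ⟨x, hx, hx1⟩ fun y hy hy1 => ?_)
    rw [inv_le_iff_one_le_mul₀' hC0]
    exact hbound y hy hy1
  · intro h
    refine ⟨(minNorm B).toNNReal⁻¹, (B ∘L B.kerᗮ.subtypeL).antilipschitz_of_bound fun z => ?_⟩
    rw [NNReal.coe_inv, Real.coe_toNNReal _ h.le, le_inv_mul_iff₀ h]
    exact minNorm_mul_norm_le B z.2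

end MinNorm

section SymmetricOperator

variable {E : Type*} [NormedAddCommGroup E] [InnerProductSpace ℝ E] {D : E →L[ℝ] E}
  {K : Submodule ℝ E}

lemma inner_sq_le_of_forall_mem_inner_nonneg (hD : (D : E →ₗ[ℝ] E).IsSymmetric)
    (hpos : ∀ x ∈ K, 0 ≤ ⟪D x, x⟫) {x y : E} (hx : x ∈ K) (hy : y ∈ K) :
    ⟪D x, y⟫ ^ 2 ≤ ⟪D x, x⟫ * ⟪D y, y⟫ := by
  let β : LinearMap.BilinForm ℝ K := LinearMap.mk₂ ℝ (fun u v : K => ⟪D u, v⟫)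
    (by simp [inner_add_left]) (by simp [inner_smul_left]) (by simp [inner_add_right])
    (by simp [inner_smul_right])
  have hβ := β.apply_mul_apply_le_of_forall_zero_le (fun u => hpos u u.2) ⟨x, hx⟩ ⟨y, hy⟩
  have hsymm : ⟪D y, x⟫ = ⟪D x, y⟫ := by rw [real_inner_comm]; exact (hD x y).symm
  simpa [β, sq, hsymm] using hβ

lemma norm_sq_le_opNorm_mul_inner_of_forall_mem_inner_nonneg
    (hD : (D : E →ₗ[ℝ] E).IsSymmetric) (hpos : ∀ x ∈ K, 0 ≤ ⟪D x, x⟫)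
    (hDK : ∀ x ∈ K, D x ∈ K) {x : E} (hx : x ∈ K) :
    ‖D x‖ ^ 2 ≤ ‖D‖ * ⟪D x, x⟫ := by
  have hcs := inner_sq_le_of_forall_mem_inner_nonneg hD hpos hx (hDK x hx)
  rw [real_inner_self_eq_norm_sq] at hcs
  have hDD : ⟪D (D x), D x⟫ ≤ ‖D‖ * ‖D x‖ ^ 2 := calc
    ⟪D (D x), D x⟫ ≤ ‖D (D x)‖ * ‖D x‖ := real_inner_le_norm _ _
    _ ≤ ‖D‖ * ‖D x‖ * ‖D x‖ := by gcongr; exact D.le_opNorm _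
    _ = ‖D‖ * ‖D x‖ ^ 2 := by ring
  rcases (sq_nonneg ‖D x‖).eq_or_lt with h0 | hpos'
  · rw [← h0]; exact mul_nonneg (norm_nonneg _) (hpos x hx)
  · refine le_of_mul_le_mul_right ?_ hpos'
    nlinarith [hpos x hx]

end SymmetricOperator

section AdjointCompSelf

variable {E F : Type*} [NormedAddCommGroup E] [InnerProductSpace ℝ E] [CompleteSpace E]
  [NormedAddCommGroup F] [InnerProductSpace ℝ F] [CompleteSpace F] (A : E →L[ℝ] F)

lemma inner_adjoint_comp_self_apply_self (x : E) : ⟪(adjoint A ∘L A) x, x⟫ = ‖A x‖ ^ 2 := by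
  rw [comp_apply, adjoint_inner_left, real_inner_self_eq_norm_sq]

lemma adjoint_apply_mem_orthogonal_ker (y : F) : adjoint A y ∈ A.kerᗮ :=
  A.orthogonal_ker ▸ Submodule.le_topologicalClosure _ ⟨y, rfl⟩

lemma sq_minNorm_le_minNorm_adjoint_comp_self : minNorm A ^ 2 ≤ minNorm (adjoint A ∘L A) := by
  by_cases hne : ∃ x ∈ A.kerᗮ, ‖x‖ = 1
  swap
  · rw [minNorm_eq_zero A hne]; simpa using minNorm_nonneg _
  refine le_minNorm _ (A.ker_adjoint_comp_self ▸ hne) fun x hx hx1 => ?_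
  rw [A.ker_adjoint_comp_self] at hx
  calc minNorm A ^ 2 ≤ ‖A x‖ ^ 2 := by
        gcongr
        · exact minNorm_nonneg A
        · exact minNorm_le_norm_apply A hx hx1
    _ = ⟪(adjoint A ∘L A) x, x⟫ := (inner_adjoint_comp_self_apply_self A x).symm
    _ ≤ ‖(adjoint A ∘L A) x‖ := by simpa [hx1] using real_inner_le_norm ((adjoint A ∘L A) x) x

lemma norm_adjoint_comp_self_sub_sq_minNorm_apply_sq_le {x : E} (hx : x ∈ A.kerᗮ) :
    ‖(adjoint A ∘L A - minNorm A ^ 2 • ContinuousLinearMap.id ℝ E) x‖ ^ 2 ≤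
      ‖adjoint A ∘L A - minNorm A ^ 2 • ContinuousLinearMap.id ℝ E‖ *
        (‖A x‖ ^ 2 - minNorm A ^ 2 * ‖x‖ ^ 2) := by
  set c := minNorm A
  set T := adjoint A ∘L A
  set D := T - c ^ 2 • ContinuousLinearMap.id ℝ E
  have hDx : ∀ x, D x = T x - c ^ 2 • x := fun x => rfl
  have hDsymm : (D : E →ₗ[ℝ] E).IsSymmetric := fun x y => by
    have hT : ⟪T x, y⟫ = ⟪x, T y⟫ := (isPositive_adjoint_comp_self A).isSymmetric x y
    simp only [coe_coe, hDx, inner_sub_left, inner_sub_right, real_inner_smul_left,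
      real_inner_smul_right, hT]
  have hDinner : ∀ x, ⟪D x, x⟫ = ‖A x‖ ^ 2 - c ^ 2 * ‖x‖ ^ 2 := fun x => by
    rw [hDx, inner_sub_left, inner_adjoint_comp_self_apply_self, real_inner_smul_left,
      real_inner_self_eq_norm_sq]
  have hDpos : ∀ x ∈ A.kerᗮ, 0 ≤ ⟪D x, x⟫ := fun x hx => by
    have := minNorm_mul_norm_le A hx
    rw [hDinner, sub_nonneg, ← mul_pow]
    gcongr
    exact mul_nonneg (minNorm_nonneg A) (norm_nonneg x)
  have hDK : ∀ x ∈ A.kerᗮ, D x ∈ A.kerᗮ := fun x hx =>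
    A.kerᗮ.sub_mem (adjoint_apply_mem_orthogonal_ker A _) (A.kerᗮ.smul_mem _ hx)
  rw [← hDinner]
  exact norm_sq_le_opNorm_mul_inner_of_forall_mem_inner_nonneg hDsymm hDpos hDK hx

lemma minNorm_adjoint_comp_self_le : minNorm (adjoint A ∘L A) ≤ minNorm A ^ 2 := by
  by_cases hne : ∃ x ∈ A.kerᗮ, ‖x‖ = 1
  swap
  · rw [minNorm_eq_zero _ (A.ker_adjoint_comp_self ▸ hne)]; positivity
  obtain ⟨u, hu, hlim⟩ := exists_seq_tendsto_minNorm A hne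
  set c := minNorm A
  set T := adjoint A ∘L A
  set D := T - c ^ 2 • ContinuousLinearMap.id ℝ E
  have hDu : Tendsto (fun n => ‖D (u n)‖) atTop (𝓝 0) := by
    have hbound : Tendsto (fun n => √(‖D‖ * (‖A (u n)‖ ^ 2 - c ^ 2))) atTop (𝓝 0) := by
      have := (((hlim.pow 2).sub_const (c ^ 2)).const_mul ‖D‖).sqrt
      rwa [sub_self, mul_zero, Real.sqrt_zero] at this
    refine squeeze_zero (fun _ => norm_nonneg _) (fun n => Real.le_sqrt_of_sq_le ?_) hbound
    have h := norm_adjoint_comp_self_sub_sq_minNorm_apply_sq_le A (hu n).1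
    rwa [(hu n).2, one_pow, mul_one] at h
  have hTu : Tendsto (fun n => ‖T (u n)‖) atTop (𝓝 (c ^ 2)) := by
    refine tendsto_iff_norm_sub_tendsto_zero.2
      (squeeze_zero (fun _ => norm_nonneg _) (fun n => ?_) hDu)
    have := abs_norm_sub_norm_le (T (u n)) (c ^ 2 • u n)
    rwa [norm_smul, (hu n).2, mul_one, Real.norm_of_nonneg (by positivity)] at this
  exact ge_of_tendsto' hTu fun n =>
    minNorm_le_norm_apply T (A.ker_adjoint_comp_self ▸ (hu n).1) (hu n).2

lemma minNorm_adjoint_comp_self : minNorm (adjoint A ∘L A) = minNorm A ^ 2 :=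
  (minNorm_adjoint_comp_self_le A).antisymm (sq_minNorm_le_minNorm_adjoint_comp_self A)

end AdjointCompSelf

theorem stmt2 {H1 H2 : Type*} [NormedAddCommGroup H1] [InnerProductSpace ℝ H1]
    [NormedAddCommGroup H2] [InnerProductSpace ℝ H2]
    [CompleteSpace H1] [CompleteSpace H2]
    (A : H1 →L[ℝ] H2) (hA : A ≠ 0) :
    (IsClosed (Set.range A) ↔
      IsClosed (Set.range ((ContinuousLinearMap.adjoint A).comp A))) ∧
    (IsClosed (Set.range A) →
      minNorm A = Real.sqrt (minNorm ((ContinuousLinearMap.adjoint A).comp A))) := by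
  have hT : adjoint A ∘L A ≠ 0 := by simpa using hA
  rw [isClosed_range_iff_minNorm_pos A hA, isClosed_range_iff_minNorm_pos _ hT,
    minNorm_adjoint_comp_self, Real.sqrt_sq (minNorm_nonneg A)]
  exact ⟨by rw [sq_pos_iff, (minNorm_nonneg A).lt_iff_ne'], fun _ => rfl⟩
end

section
/- Let U : H → H be an operator with nonempty fixed point set Fix U and let ρ ≥ 0. Then U is ρ-strongly quasi-nonexpansive if and only if the relaxation Id + ((1+ρ)/2)(U − Id) is a cutter. -/
open scoped RealInnerProductSpace

/-- `U` is `ρ`-strongly quasi-nonexpansive. -/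
def IsSQNE {H : Type*} [NormedAddCommGroup H] [InnerProductSpace ℝ H]
    (U : H → H) (ρ : ℝ) : Prop :=
  ∀ x : H, ∀ z ∈ Function.fixedPoints U, ‖U x - z‖ ^ 2 ≤ ‖x - z‖ ^ 2 - ρ * ‖U x - x‖ ^ 2

/-- `T` is a cutter. -/
def IsCutter {H : Type*} [NormedAddCommGroup H] [InnerProductSpace ℝ H]
    (T : H → H) : Prop :=
  ∀ x : H, ∀ z ∈ Function.fixedPoints T, inner ℝ (z - T x) (x - T x) ≤ (0 : ℝ)

theorem stmt4 {H : Type*} [NormedAddCommGroup H] [InnerProductSpace ℝ H]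
    (U : H → H) (hfix : (Function.fixedPoints U).Nonempty) (ρ : ℝ) (hρ : 0 ≤ ρ) :
    IsSQNE U ρ ↔ IsCutter (fun x => x + ((1 + ρ) / 2) • (U x - x)) := by
  set c : ℝ := (1 + ρ) / 2 with hc
  have hcpos : 0 < c := by rw [hc]; linarith
  have hfixT : Function.fixedPoints (fun x => x + c • (U x - x)) = Function.fixedPoints U := by
    ext x
    simp only [Function.mem_fixedPoints, Function.IsFixedPt]
    constructor
    · intro h
      have h0 : c • (U x - x) = 0 := by
        have := add_eq_left.mp h
        exact this
      rcases smul_eq_zero.mp h0 with h1 | h1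
      · exact absurd h1 hcpos.ne'
      · exact sub_eq_zero.mp h1
    · intro h
      simp [h]
  have key : ∀ x z : H, (inner ℝ (z - (x + c • (U x - x))) (x - (x + c • (U x - x))) : ℝ) =
      (c * c) * ‖U x - x‖ ^ 2 - c * inner ℝ (z - x) (U x - x) := by
    intro x z
    have e1 : x - (x + c • (U x - x)) = -(c • (U x - x)) := by abel
    have e2 : z - (x + c • (U x - x)) = (z - x) - c • (U x - x) := by abel
    rw [e1, e2, inner_neg_right, inner_sub_left, real_inner_smul_right,
      real_inner_smul_right, real_inner_smul_left, real_inner_self_eq_norm_sq]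
    ring
  have expn : ∀ x z : H, ‖U x - z‖ ^ 2 =
      ‖U x - x‖ ^ 2 + 2 * inner ℝ (U x - x) (x - z) + ‖x - z‖ ^ 2 := by
    intro x z
    have e : U x - z = (U x - x) + (x - z) := by abel
    rw [e, norm_add_sq_real]
  have symm : ∀ x z : H, (inner ℝ (z - x) (U x - x) : ℝ) = - inner ℝ (U x - x) (x - z) := by
    intro x z
    rw [real_inner_comm]
    have : z - x = -(x - z) := by abel
    rw [this, inner_neg_right]
  constructor
  · intro h
    intro x z hz
    rw [hfixT] at hz
    have hsq := h x z hz
    rw [expn x z] at hsq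
    simp only
    rw [key x z, symm x z]
    have h2c : (2 : ℝ) * c = 1 + ρ := by rw [hc]; ring
    have h2 : 2 * c * ‖U x - x‖ ^ 2 + 2 * inner ℝ (U x - x) (x - z) ≤ 0 := by
      rw [h2c]; linarith
    nlinarith [mul_le_mul_of_nonneg_left h2 hcpos.le]
  · intro h
    intro x z hz
    have hz' : z ∈ Function.fixedPoints (fun x => x + c • (U x - x)) := by rw [hfixT]; exact hz
    have hcut := h x z hz'
    simp only at hcut
    rw [key x z, symm x z] at hcut
    rw [expn x z]
    have h2 : c * c * ‖U x - x‖ ^ 2 + c * inner ℝ (U x - x) (x - z) ≤ 0 := by linarith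
    have h3 : c * (c * ‖U x - x‖ ^ 2 + inner ℝ (U x - x) (x - z)) ≤ 0 := by linarith [h2]; 
    have h4 : c * ‖U x - x‖ ^ 2 + inner ℝ (U x - x) (x - z) ≤ 0 :=
      nonpos_of_mul_nonpos_right (by linarith [h3]) hcpos
    have : (2 : ℝ) * c = 1 + ρ := by rw [hc]; ring
    nlinarith [h4]
end

section
/- Let U_i : H → H be ρ_i-strongly quasi-nonexpansive with ρ_i > 0, i = 1,…,m, and assume ⋂_{i=1}^m Fix U_i ≠ ∅. Let ω_i > 0 with ∑ ω_i = 1 and U := ∑_{i=1}^m ω_i U_i. Then U is ρ-SQNE with ρ := (∑_{i=1}^m ω_i/(ρ_i+1))^{-1} − 1, and ρ ≥ min_i ρ_i > 0. -/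
open scoped RealInnerProductSpace

/-- Cauchy–Schwarz/Jensen for weighted sums of vectors. -/
lemma sq_norm_weighted_sum_le {H : Type*} [NormedAddCommGroup H] [InnerProductSpace ℝ H]
    {m : ℕ} (c : Fin m → ℝ) (w : Fin m → H) (hc : ∀ i, 0 ≤ c i) :
    ‖∑ i, c i • w i‖ ^ 2 ≤ (∑ i, c i) * ∑ i, c i * ‖w i‖ ^ 2 := by
  have h1 : ‖∑ i, c i • w i‖ ≤ ∑ i, c i * ‖w i‖ := by
    calc ‖∑ i, c i • w i‖ ≤ ∑ i, ‖c i • w i‖ := norm_sum_le _ _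
      _ = ∑ i, c i * ‖w i‖ := by
          refine Finset.sum_congr rfl fun i _ => ?_
          rw [norm_smul, Real.norm_of_nonneg (hc i)]
  have h2 : (∑ i, c i * ‖w i‖) ^ 2 ≤ (∑ i, c i) * ∑ i, c i * ‖w i‖ ^ 2 := by
    have key := Finset.sum_mul_sq_le_sq_mul_sq Finset.univ
      (fun i => Real.sqrt (c i)) (fun i => Real.sqrt (c i) * ‖w i‖)
    have e1 : ∀ i, Real.sqrt (c i) * (Real.sqrt (c i) * ‖w i‖) = c i * ‖w i‖ := by
      intro i
      rw [← mul_assoc, Real.mul_self_sqrt (hc i)]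
    have e2 : ∀ i : Fin m, Real.sqrt (c i) ^ 2 = c i := fun i => Real.sq_sqrt (hc i)
    have e3 : ∀ i : Fin m, (Real.sqrt (c i) * ‖w i‖) ^ 2 = c i * ‖w i‖ ^ 2 := by
      intro i
      rw [mul_pow, Real.sq_sqrt (hc i)]
    simp only [e1, e2, e3] at key
    exact key
  calc ‖∑ i, c i • w i‖ ^ 2 ≤ (∑ i, c i * ‖w i‖) ^ 2 := by
        have hnn : (0:ℝ) ≤ ∑ i, c i * ‖w i‖ :=
          le_trans (norm_nonneg _) h1
        nlinarith [norm_nonneg (∑ i, c i • w i)]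
    _ ≤ _ := h2

/-- SQNE inequality rewritten via inner products. -/
lemma sqne_char {H : Type*} [NormedAddCommGroup H] [InnerProductSpace ℝ H]
    (x z y : H) (ρ : ℝ) :
    ‖y - z‖ ^ 2 ≤ ‖x - z‖ ^ 2 - ρ * ‖y - x‖ ^ 2 ↔
      (ρ + 1) * ‖x - y‖ ^ 2 ≤ 2 * ⟪x - z, x - y⟫ := by
  have hd : y - z = (x - z) - (x - y) := by abel
  have hn : ‖y - x‖ = ‖x - y‖ := norm_sub_rev _ _
  rw [hd, norm_sub_sq_real, hn]
  constructor <;> intro h <;> nlinarith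

theorem stmt6 {H : Type*} [NormedAddCommGroup H] [InnerProductSpace ℝ H]
    {m : ℕ} (hm : 0 < m) (U : Fin m → H → H) (ρ : Fin m → ℝ)
    (hρ : ∀ i, 0 < ρ i) (hU : ∀ i, IsSQNE (U i) (ρ i))
    (hfix : (⋂ i, Function.fixedPoints (U i)).Nonempty)
    (ω : Fin m → ℝ) (hω : ∀ i, 0 < ω i) (hsum : ∑ i, ω i = 1) :
    IsSQNE (fun x => ∑ i, ω i • U i x) ((∑ i, ω i / (ρ i + 1))⁻¹ - 1) ∧
      (∑ i, ω i / (ρ i + 1))⁻¹ - 1 ≥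
        Finset.univ.inf' ⟨⟨0, hm⟩, Finset.mem_univ _⟩ ρ ∧
      0 < Finset.univ.inf' ⟨⟨0, hm⟩, Finset.mem_univ _⟩ ρ := by
  haveI : Nonempty (Fin m) := ⟨⟨0, hm⟩⟩
  set S : ℝ := ∑ i, ω i / (ρ i + 1) with hS_def
  have hρ1 : ∀ i, (0:ℝ) < ρ i + 1 := fun i => by linarith [hρ i]
  have hSpos : 0 < S := Finset.sum_pos (fun i _ => div_pos (hω i) (hρ1 i)) Finset.univ_nonempty
  set μ : ℝ := Finset.univ.inf' ⟨⟨0, hm⟩, Finset.mem_univ _⟩ ρ with hμ_def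
  have hμpos : 0 < μ := by
    rw [hμ_def]; apply (Finset.lt_inf'_iff _).mpr
    exact fun i _ => hρ i
  have hμle : ∀ i, μ ≤ ρ i := fun i => Finset.inf'_le _ (Finset.mem_univ i)
  -- ρ ≥ μ part
  have hSle : S ≤ (μ + 1)⁻¹ := by
    have : S ≤ ∑ i, ω i / (μ + 1) := by
      refine Finset.sum_le_sum fun i _ => ?_
      exact div_le_div_of_nonneg_left (hω i).le (by linarith [hμpos]) (by linarith [hμle i])
    rw [← Finset.sum_div, hsum] at this
    simpa [one_div] using this
  have hμ1pos : (0:ℝ) < μ + 1 := by linarith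
  have hinv : μ + 1 ≤ S⁻¹ := by
    have := inv_anti₀ hSpos hSle
    simpa using this
  refine ⟨?_, by linarith, hμpos⟩
  -- main SQNE part
  intro x z hz
  -- first: z is a common fixed point
  obtain ⟨w, hw⟩ := hfix
  have hw' : ∀ i, U i w = w := fun i => Set.mem_iInter.mp hw i
  have hzfix : ∀ i, U i z = z := by
    have hz' : ∑ i, ω i • U i z = z := hz
    have hterm : ∀ i, (ρ i + 1) * ‖z - U i z‖ ^ 2 ≤ 2 * ⟪z - w, z - U i z⟫ := by
      intro i
      have := (hU i z w (hw' i))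
      have := (sqne_char z w (U i z) (ρ i)).mp this
      simpa [norm_sub_rev (U i z) z] using this
    have hsum0 : ∑ i, ω i • (z - U i z) = 0 := by
      simp [smul_sub, Finset.sum_sub_distrib, ← Finset.sum_smul, hsum, hz']
    have hinner0 : (∑ i, ω i * ⟪z - w, z - U i z⟫) = 0 := by
      have : ⟪z - w, ∑ i, ω i • (z - U i z)⟫ = ∑ i, ω i * ⟪z - w, z - U i z⟫ := by
        rw [inner_sum]
        exact Finset.sum_congr rfl fun i _ => real_inner_smul_right _ _ _
      rw [← this, hsum0, inner_zero_right]
    have hge : ∀ i ∈ Finset.univ, (0:ℝ) ≤ ω i * ((ρ i + 1) * ‖z - U i z‖ ^ 2) :=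
      fun i _ => mul_nonneg (hω i).le (mul_nonneg (hρ1 i).le (sq_nonneg _))
    have hsumle : ∑ i, ω i * ((ρ i + 1) * ‖z - U i z‖ ^ 2) ≤ 0 := by
      calc ∑ i, ω i * ((ρ i + 1) * ‖z - U i z‖ ^ 2)
          ≤ ∑ i, ω i * (2 * ⟪z - w, z - U i z⟫) := by
            refine Finset.sum_le_sum fun i _ => mul_le_mul_of_nonneg_left (hterm i) (hω i).le
        _ = 2 * ∑ i, ω i * ⟪z - w, z - U i z⟫ := by
            rw [Finset.mul_sum]; exact Finset.sum_congr rfl fun i _ => by ring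
        _ = 0 := by rw [hinner0]; ring
    intro i
    have h0 : ω i * ((ρ i + 1) * ‖z - U i z‖ ^ 2) = 0 := by
      have := Finset.sum_le_sum hge
      have hall := (Finset.sum_eq_zero_iff_of_nonneg hge).mp
        (le_antisymm hsumle (Finset.sum_nonneg hge))
      exact hall i (Finset.mem_univ i)
    have : ‖z - U i z‖ ^ 2 = 0 := by
      by_contra hne
      exact (mul_ne_zero (hω i).ne' (mul_ne_zero (hρ1 i).ne' hne)) h0
    have : z - U i z = 0 := by
      rwa [pow_eq_zero_iff (two_ne_zero), norm_eq_zero] at this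
    have := sub_eq_zero.mp this
    exact this.symm
  -- now the main inequality
  set v : Fin m → H := fun i => x - U i x with hv_def
  have hUx : (fun x => ∑ i, ω i • U i x) x = x - ∑ i, ω i • v i := by
    simp only [hv_def, smul_sub, Finset.sum_sub_distrib, ← Finset.sum_smul, hsum, one_smul]
    abel
  have hterm : ∀ i, (ρ i + 1) * ‖v i‖ ^ 2 ≤ 2 * ⟪x - z, v i⟫ := by
    intro i
    have := (sqne_char x z (U i x) (ρ i)).mp (hU i x z (hzfix i))
    simpa [hv_def] using this
  -- Cauchy–Schwarz step: ‖∑ ω_i • v i‖^2 ≤ S * ∑ ω_i (ρ_i+1) ‖v i‖^2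
  have hCS : ‖∑ i, ω i • v i‖ ^ 2 ≤ S * ∑ i, ω i * ((ρ i + 1) * ‖v i‖ ^ 2) := by
    have key := sq_norm_weighted_sum_le (fun i => ω i / (ρ i + 1))
      (fun i => (ρ i + 1) • v i) (fun i => (div_pos (hω i) (hρ1 i)).le)
    have e1 : ∀ i : Fin m, (ω i / (ρ i + 1)) • ((ρ i + 1) • v i) = ω i • v i := by
      intro i
      rw [smul_smul, div_mul_cancel₀ _ (hρ1 i).ne']
    have e2 : ∀ i : Fin m, ω i / (ρ i + 1) * ‖(ρ i + 1) • v i‖ ^ 2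
        = ω i * ((ρ i + 1) * ‖v i‖ ^ 2) := by
      intro i
      rw [norm_smul, Real.norm_of_nonneg (hρ1 i).le, mul_pow]
      field_simp [(hρ1 i).ne']
    simp only [e1, e2] at key
    exact key
  have hinnersum : ⟪x - z, ∑ i, ω i • v i⟫ = ∑ i, ω i * ⟪x - z, v i⟫ := by
    rw [inner_sum]
    exact Finset.sum_congr rfl fun i _ => real_inner_smul_right _ _ _
  have hsum2 : ∑ i, ω i * ((ρ i + 1) * ‖v i‖ ^ 2) ≤ 2 * ⟪x - z, ∑ i, ω i • v i⟫ := by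
    rw [hinnersum, Finset.mul_sum]
    refine Finset.sum_le_sum fun i _ => ?_
    have := mul_le_mul_of_nonneg_left (hterm i) (hω i).le
    linarith [this]
  -- combine
  have hkey : S⁻¹ * ‖∑ i, ω i • v i‖ ^ 2 ≤ 2 * ⟪x - z, ∑ i, ω i • v i⟫ := by
    have h1 : S⁻¹ * ‖∑ i, ω i • v i‖ ^ 2 ≤ ∑ i, ω i * ((ρ i + 1) * ‖v i‖ ^ 2) := by
      rw [inv_mul_le_iff₀ hSpos]
      exact hCS
    linarith
  -- conclude via sqne_char
  rw [show (fun x => ∑ i, ω i • U i x) x - z = (x - z) - (∑ i, ω i • v i) by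
        rw [hUx]; abel,
      show (fun x => ∑ i, ω i • U i x) x - x = -(∑ i, ω i • v i) by
        rw [hUx]; abel]
  rw [norm_sub_sq_real, norm_neg]
  nlinarith [hkey]
end

section
/- Let U_i : H → H be ρ_i-strongly quasi-nonexpansive with ρ_i > 0, i = 1,…,m, having a common fixed point, and let U := ∑_{i=1}^m ω_i U_i with ω_i > 0, ∑ ω_i = 1. Then Fix U = ⋂_{i=1}^m Fix U_i. -/
open scoped RealInnerProductSpace

/-!
Fix a common fixed point `z`. Jensen's inequality for `‖·‖²` combined with the strong
quasi-nonexpansiveness of each `Uᵢ` gives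
`‖U x - z‖² ≤ ‖x - z‖² - ∑ ωᵢ ρᵢ ‖Uᵢ x - x‖²`.
At a fixed point `x` of `U` the left side equals `‖x - z‖²`, so the nonnegative terms
`ωᵢ ρᵢ ‖Uᵢ x - x‖²` all vanish, and `ωᵢ ρᵢ > 0` forces `Uᵢ x = x`.
-/

open Function Finset

theorem norm_sum_smul_sq_le {E ι : Type*} [SeminormedAddCommGroup E] [NormedSpace ℝ E]
    (s : Finset ι) {w : ι → ℝ} (v : ι → E) (hw₀ : ∀ i ∈ s, 0 ≤ w i)
    (hw₁ : ∑ i ∈ s, w i = 1) :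
    ‖∑ i ∈ s, w i • v i‖ ^ 2 ≤ ∑ i ∈ s, w i * ‖v i‖ ^ 2 :=
  (convexOn_univ_norm.pow (fun x _ => norm_nonneg x) 2).map_sum_le hw₀ hw₁
    (fun _ _ => Set.mem_univ _)

theorem isFixedPt_sum_smul {R M ι : Type*} [Semiring R] [AddCommMonoid M] [Module R M]
    {s : Finset ι} {U : ι → M → M} {w : ι → R} (hw₁ : ∑ i ∈ s, w i = 1) {x : M}
    (hx : ∀ i ∈ s, IsFixedPt (U i) x) :
    IsFixedPt (fun y => ∑ i ∈ s, w i • U i y) x := by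
  calc ∑ i ∈ s, w i • U i x = ∑ i ∈ s, w i • x := sum_congr rfl fun i hi => by rw [hx i hi]
    _ = x := by rw [← sum_smul, hw₁, one_smul]

section SQNE

variable {H ι : Type*} [NormedAddCommGroup H] [InnerProductSpace ℝ H] {s : Finset ι}
  {U : ι → H → H} {ρ w : ι → ℝ}

theorem IsSQNE.norm_sum_smul_sub_sq_le (hU : ∀ i ∈ s, IsSQNE (U i) (ρ i))
    (hw₀ : ∀ i ∈ s, 0 ≤ w i) (hw₁ : ∑ i ∈ s, w i = 1) (x : H) {z : H}
    (hz : ∀ i ∈ s, z ∈ fixedPoints (U i)) :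
    ‖∑ i ∈ s, w i • U i x - z‖ ^ 2 ≤ ‖x - z‖ ^ 2 - ∑ i ∈ s, w i * ρ i * ‖U i x - x‖ ^ 2 := by
  have hcomb : ∑ i ∈ s, w i • U i x - z = ∑ i ∈ s, w i • (U i x - z) := by
    simp only [smul_sub, sum_sub_distrib, ← sum_smul, hw₁, one_smul]
  calc ‖∑ i ∈ s, w i • U i x - z‖ ^ 2
      ≤ ∑ i ∈ s, w i * ‖U i x - z‖ ^ 2 := hcomb ▸ norm_sum_smul_sq_le s _ hw₀ hw₁
    _ ≤ ∑ i ∈ s, w i * (‖x - z‖ ^ 2 - ρ i * ‖U i x - x‖ ^ 2) :=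
        sum_le_sum fun i hi => mul_le_mul_of_nonneg_left (hU i hi x z (hz i hi)) (hw₀ i hi)
    _ = ‖x - z‖ ^ 2 - ∑ i ∈ s, w i * ρ i * ‖U i x - x‖ ^ 2 := by
        simp only [mul_sub, sum_sub_distrib, ← sum_mul, hw₁, one_mul, mul_assoc]

theorem IsSQNE.isFixedPt_of_isFixedPt_sum_smul (hU : ∀ i ∈ s, IsSQNE (U i) (ρ i))
    (hρ : ∀ i ∈ s, 0 < ρ i) (hw : ∀ i ∈ s, 0 < w i) (hw₁ : ∑ i ∈ s, w i = 1)
    {z : H} (hz : ∀ i ∈ s, z ∈ fixedPoints (U i)) {x : H}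
    (hx : IsFixedPt (fun y => ∑ i ∈ s, w i • U i y) x) {i : ι} (hi : i ∈ s) :
    IsFixedPt (U i) x := by
  have hterm_nonneg : ∀ j ∈ s, 0 ≤ w j * ρ j * ‖U j x - x‖ ^ 2 := fun j hj =>
    mul_nonneg (mul_nonneg (hw j hj).le (hρ j hj).le) (sq_nonneg _)
  have hsum_nonpos : ∑ j ∈ s, w j * ρ j * ‖U j x - x‖ ^ 2 ≤ 0 := by
    have := norm_sum_smul_sub_sq_le hU (fun j hj => (hw j hj).le) hw₁ x hz
    rw [hx.eq] at this
    linarith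
  have hterm : w i * ρ i * ‖U i x - x‖ ^ 2 = 0 :=
    (sum_eq_zero_iff_of_nonneg hterm_nonneg).mp
      (le_antisymm hsum_nonpos (sum_nonneg hterm_nonneg)) i hi
  have hwρ : w i * ρ i ≠ 0 := (mul_pos (hw i hi) (hρ i hi)).ne'
  show U i x = x
  simpa [hwρ, sub_eq_zero] using hterm

end SQNE

theorem stmt7 {H : Type*} [NormedAddCommGroup H] [InnerProductSpace ℝ H]
    {m : ℕ} (U : Fin m → H → H) (ρ : Fin m → ℝ)
    (hρ : ∀ i, 0 < ρ i) (hU : ∀ i, IsSQNE (U i) (ρ i))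
    (hfix : (⋂ i, Function.fixedPoints (U i)).Nonempty)
    (ω : Fin m → ℝ) (hω : ∀ i, 0 < ω i) (hsum : ∑ i, ω i = 1) :
    Function.fixedPoints (fun x => ∑ i, ω i • U i x) =
      ⋂ i, Function.fixedPoints (U i) := by
  obtain ⟨z, hz⟩ := hfix
  rw [Set.mem_iInter] at hz
  ext x
  simp only [Set.mem_iInter, mem_fixedPoints]
  exact ⟨fun hx i => IsSQNE.isFixedPt_of_isFixedPt_sum_smul (fun i _ => hU i) (fun i _ => hρ i)
      (fun i _ => hω i) hsum (fun i _ => hz i) hx (mem_univ i),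
    fun hx => isFixedPt_sum_smul hsum fun i _ => hx i⟩
end

section
/- Let U_i : H → H be ρ_i-strongly quasi-nonexpansive with ρ_i > 0, i = 1,…,m, with ⋂_{i=1}^m Fix U_i ≠ ∅, and let U := U_m ∘ ⋯ ∘ U_1. Then U is ρ-SQNE with ρ := (∑_{i=1}^m 1/ρ_i)^{-1} ≥ (min_i ρ_i)/m > 0, and Fix U = ⋂_{i=1}^m Fix U_i. -/
open scoped RealInnerProductSpace

/-- `prodSeq U n = U (n-1) ∘ ⋯ ∘ U 0`. -/
def prodSeq {H : Type*} (U : ℕ → H → H) : ℕ → H → H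
  | 0 => id
  | n + 1 => U n ∘ prodSeq U n

theorem stmt8 {H : Type*} [NormedAddCommGroup H] [InnerProductSpace ℝ H]
    {m : ℕ} (hm : 0 < m) (U : ℕ → H → H) (ρ : ℕ → ℝ)
    (hρ : ∀ i < m, 0 < ρ i) (hU : ∀ i < m, IsSQNE (U i) (ρ i))
    (hfix : (⋂ i ∈ Finset.range m, Function.fixedPoints (U i)).Nonempty) :
    IsSQNE (prodSeq U m) (∑ i ∈ Finset.range m, 1 / ρ i)⁻¹ ∧
      (∑ i ∈ Finset.range m, 1 / ρ i)⁻¹ ≥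
        ((Finset.range m).inf' ⟨0, Finset.mem_range.mpr hm⟩ ρ) / m ∧
      0 < ((Finset.range m).inf' ⟨0, Finset.mem_range.mpr hm⟩ ρ) / m ∧
      Function.fixedPoints (prodSeq U m) =
        ⋂ i ∈ Finset.range m, Function.fixedPoints (U i) := by
  obtain ⟨z₀, hz₀⟩ := hfix
  have key : ∀ z ∈ ⋂ i ∈ Finset.range m, Function.fixedPoints (U i), ∀ x : H, ∀ n ≤ m,
      ‖prodSeq U n x - z‖ ^ 2 ≤ ‖x - z‖ ^ 2 -
        ∑ i ∈ Finset.range n, ρ i * ‖prodSeq U (i + 1) x - prodSeq U i x‖ ^ 2 := by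
    intro z hz x n hn
    induction n with
    | zero => simp [prodSeq]
    | succ n ih =>
      have hzn : z ∈ Function.fixedPoints (U n) := by
        simp only [Set.mem_iInter] at hz
        exact hz n (Finset.mem_range.mpr (by omega))
      have h1 := hU n (by omega) (prodSeq U n x) z hzn
      have h2 := ih (by omega)
      rw [Finset.sum_range_succ]
      have he : prodSeq U (n + 1) x = U n (prodSeq U n x) := rfl
      rw [he]
      linarith
  have fix_sub : ∀ z ∈ ⋂ i ∈ Finset.range m, Function.fixedPoints (U i),
      ∀ n ≤ m, prodSeq U n z = z := by
    intro z hz n hn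
    induction n with
    | zero => rfl
    | succ n ih =>
      have he : prodSeq U (n + 1) z = U n (prodSeq U n z) := rfl
      rw [he, ih (by omega)]
      simp only [Set.mem_iInter] at hz
      exact hz n (Finset.mem_range.mpr (by omega))
  have hfixeq : Function.fixedPoints (prodSeq U m) =
      ⋂ i ∈ Finset.range m, Function.fixedPoints (U i) := by
    apply Set.Subset.antisymm
    · intro x hx
      have hx' : prodSeq U m x = x := hx
      have hk := key z₀ hz₀ x m le_rfl
      rw [hx'] at hk
      have hnn : ∀ j ∈ Finset.range m,
          0 ≤ ρ j * ‖prodSeq U (j + 1) x - prodSeq U j x‖ ^ 2 := fun j hj =>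
        mul_nonneg (hρ j (Finset.mem_range.mp hj)).le (sq_nonneg _)
      have hsum0 : ∑ i ∈ Finset.range m,
          ρ i * ‖prodSeq U (i + 1) x - prodSeq U i x‖ ^ 2 = 0 :=
        le_antisymm (by linarith) (Finset.sum_nonneg hnn)
      have hzero : ∀ i < m, prodSeq U (i + 1) x = prodSeq U i x := by
        intro i hi
        have h0 := (Finset.sum_eq_zero_iff_of_nonneg hnn).mp hsum0 i (Finset.mem_range.mpr hi)
        have hn0 : ‖prodSeq U (i + 1) x - prodSeq U i x‖ ^ 2 = 0 := by
          rcases mul_eq_zero.mp h0 with h | h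
          · exact absurd h (hρ i hi).ne'
          · exact h
        have := norm_eq_zero.mp (pow_eq_zero_iff two_ne_zero |>.mp hn0)
        exact sub_eq_zero.mp this
      have hall : ∀ i ≤ m, prodSeq U i x = x := by
        intro i hi
        induction i with
        | zero => rfl
        | succ i ih => rw [hzero i (by omega), ih (by omega)]
      simp only [Set.mem_iInter]
      intro i hi
      rw [Finset.mem_range] at hi
      have : U i (prodSeq U i x) = prodSeq U (i + 1) x := rfl
      have hfp : U i x = x := by
        rw [← hall i hi.le, this, hzero i hi, hall i hi.le]
      exact hfp
    · intro z hz
      exact fix_sub z hz m le_rfl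
  set T := ∑ i ∈ Finset.range m, 1 / ρ i with hT
  have hTpos : 0 < T := by
    apply Finset.sum_pos
    · intro i hi
      exact one_div_pos.mpr (hρ i (Finset.mem_range.mp hi))
    · exact ⟨0, Finset.mem_range.mpr hm⟩
  have hSQNE : IsSQNE (prodSeq U m) T⁻¹ := by
    intro x z hz
    rw [hfixeq] at hz
    have hk := key z hz x m le_rfl
    set S := ∑ i ∈ Finset.range m, ρ i * ‖prodSeq U (i + 1) x - prodSeq U i x‖ ^ 2 with hS
    have tele : prodSeq U m x - x =
        ∑ i ∈ Finset.range m, (prodSeq U (i + 1) x - prodSeq U i x) := by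
      rw [Finset.sum_range_sub (fun i => prodSeq U i x)]
      rfl
    have hnorm : ‖prodSeq U m x - x‖ ≤
        ∑ i ∈ Finset.range m, ‖prodSeq U (i + 1) x - prodSeq U i x‖ := by
      rw [tele]; exact norm_sum_le _ _
    have hCS : (∑ i ∈ Finset.range m, ‖prodSeq U (i + 1) x - prodSeq U i x‖) ^ 2 ≤ T * S := by
      have h := Finset.sum_mul_sq_le_sq_mul_sq (Finset.range m)
        (fun i => Real.sqrt (1 / ρ i))
        (fun i => Real.sqrt (ρ i) * ‖prodSeq U (i + 1) x - prodSeq U i x‖)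
      have e1 : ∑ i ∈ Finset.range m,
          Real.sqrt (1 / ρ i) * (Real.sqrt (ρ i) * ‖prodSeq U (i + 1) x - prodSeq U i x‖) =
          ∑ i ∈ Finset.range m, ‖prodSeq U (i + 1) x - prodSeq U i x‖ := by
        apply Finset.sum_congr rfl
        intro i hi
        have hρi := hρ i (Finset.mem_range.mp hi)
        rw [← mul_assoc, ← Real.sqrt_mul (by positivity), one_div_mul_cancel hρi.ne',
          Real.sqrt_one, one_mul]
      have e2 : ∑ i ∈ Finset.range m, Real.sqrt (1 / ρ i) ^ 2 = T := by
        apply Finset.sum_congr rfl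
        intro i hi
        exact Real.sq_sqrt (one_div_pos.mpr (hρ i (Finset.mem_range.mp hi))).le
      have e3 : ∑ i ∈ Finset.range m,
          (Real.sqrt (ρ i) * ‖prodSeq U (i + 1) x - prodSeq U i x‖) ^ 2 = S := by
        apply Finset.sum_congr rfl
        intro i hi
        have hρi := hρ i (Finset.mem_range.mp hi)
        rw [mul_pow, Real.sq_sqrt hρi.le]
      rw [e1, e2, e3] at h
      exact h
    have hUx : ‖prodSeq U m x - x‖ ^ 2 ≤ T * S := by
      calc ‖prodSeq U m x - x‖ ^ 2
          ≤ (∑ i ∈ Finset.range m, ‖prodSeq U (i + 1) x - prodSeq U i x‖) ^ 2 := by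
            apply pow_le_pow_left₀ (norm_nonneg _) hnorm
        _ ≤ T * S := hCS
    have hkey2 : T⁻¹ * ‖prodSeq U m x - x‖ ^ 2 ≤ S := by
      rw [inv_mul_le_iff₀ hTpos]
      linarith [hUx]
    linarith
  have hμ : 0 < (Finset.range m).inf' ⟨0, Finset.mem_range.mpr hm⟩ ρ := by
    apply (Finset.lt_inf'_iff ..).mpr
    intro i hi
    exact hρ i (Finset.mem_range.mp hi)
  set μ := (Finset.range m).inf' ⟨0, Finset.mem_range.mpr hm⟩ ρ with hμdef
  have hTle : T ≤ m / μ := by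
    have : T ≤ ∑ _i ∈ Finset.range m, 1 / μ := by
      apply Finset.sum_le_sum
      intro i hi
      exact one_div_le_one_div_of_le hμ (Finset.inf'_le ρ hi)
    calc T ≤ ∑ _i ∈ Finset.range m, 1 / μ := this
      _ = m / μ := by rw [Finset.sum_const, Finset.card_range, nsmul_eq_mul, mul_one_div]
  have hge : T⁻¹ ≥ μ / m := by
    have h1 : (m / μ)⁻¹ ≤ T⁻¹ := inv_anti₀ hTpos hTle
    rwa [inv_div] at h1
  exact ⟨hSQNE, hge, div_pos hμ (Nat.cast_pos.mpr hm), hfixeq⟩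
end

section
/- Let U_i : H → H be ρ_i-strongly quasi-nonexpansive with ρ_i > 0, i = 1,…,m, with common fixed point set F := ⋂ Fix U_i ≠ ∅, and let U := ∑ ω_i U_i with ω_i > 0, ∑ ω_i = 1. Then for all x ∈ H: 2 d(x, Fix U)·‖U(x) − x‖ ≥ ∑_{i=1}^m ω_i ρ_i ‖U_i(x) − x‖². -/
open scoped RealInnerProductSpace

theorem stmt9 {H : Type*} [NormedAddCommGroup H] [InnerProductSpace ℝ H]
    {m : ℕ} (U : Fin m → H → H) (ρ : Fin m → ℝ)
    (hρ : ∀ i, 0 < ρ i) (hU : ∀ i, IsSQNE (U i) (ρ i))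
    (hfix : (⋂ i, Function.fixedPoints (U i)).Nonempty)
    (ω : Fin m → ℝ) (hω : ∀ i, 0 < ω i) (hsum : ∑ i, ω i = 1) :
    ∀ x : H,
      2 * Metric.infDist x (Function.fixedPoints (fun y => ∑ i, ω i • U i y)) *
          ‖(∑ i, ω i • U i x) - x‖ ≥
        ∑ i, ω i * ρ i * ‖U i x - x‖ ^ 2 := by
  intro x
  set T : H → H := fun y => ∑ i, ω i • U i y with hT
  have key : ∀ y : H, ∀ z ∈ ⋂ i, Function.fixedPoints (U i),
      ∑ i, ω i * ρ i * ‖U i y - y‖ ^ 2 ≤ 2 * ⟪T y - y, z - y⟫ := by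
    intro y z hz
    have hrw : T y - y = ∑ i, ω i • (U i y - y) := by
      simp [hT, smul_sub, Finset.sum_sub_distrib, ← Finset.sum_smul, hsum]
    rw [hrw, sum_inner, Finset.mul_sum]
    apply Finset.sum_le_sum
    intro i _
    have hzi : z ∈ Function.fixedPoints (U i) := Set.mem_iInter.mp hz i
    have hsq := hU i y z hzi
    have expand : ‖U i y - z‖ ^ 2
        = ‖U i y - y‖ ^ 2 + 2 * ⟪U i y - y, y - z⟫ + ‖y - z‖ ^ 2 := by
      have h := norm_add_sq_real (U i y - y) (y - z)
      rw [sub_add_sub_cancel] at h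
      exact h
    have hinner : ⟪ω i • (U i y - y), z - y⟫ = ω i * ⟪U i y - y, z - y⟫ :=
      real_inner_smul_left _ _ _
    have hflip : ⟪U i y - y, z - y⟫ = - ⟪U i y - y, y - z⟫ := by
      have : z - y = -(y - z) := by abel
      rw [this, inner_neg_right]
    rw [hinner]
    nlinarith [sq_nonneg ‖U i y - y‖, (hω i).le, hρ i]
  have hFsub : Function.fixedPoints T ⊆ ⋂ i, Function.fixedPoints (U i) := by
    intro z hz
    obtain ⟨w, hw⟩ := hfix
    have h := key z w hw
    have hTz : T z = z := hz
    rw [hTz, sub_self, inner_zero_left, mul_zero] at h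
    have hterm : ∀ i ∈ Finset.univ, ω i * ρ i * ‖U i z - z‖ ^ 2 = 0 := by
      rw [← Finset.sum_eq_zero_iff_of_nonneg]
      · exact le_antisymm h (Finset.sum_nonneg fun i _ =>
          mul_nonneg (mul_nonneg (hω i).le (hρ i).le) (sq_nonneg _))
      · exact fun i _ => mul_nonneg (mul_nonneg (hω i).le (hρ i).le) (sq_nonneg _)
    refine Set.mem_iInter.mpr fun i => ?_
    have h0 := hterm i (Finset.mem_univ i)
    have : ‖U i z - z‖ ^ 2 = 0 := by
      rcases mul_eq_zero.mp (by rw [mul_assoc] at h0; exact h0) with h' | h'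
      · exact absurd h' (ne_of_gt (hω i))
      · rcases mul_eq_zero.mp h' with h'' | h''
        · exact absurd h'' (ne_of_gt (hρ i))
        · exact h''
    have := pow_eq_zero_iff (n := 2) (by norm_num) |>.mp this
    have := norm_eq_zero.mp this
    exact sub_eq_zero.mp this
  obtain ⟨w, hw⟩ := hfix
  have hwT : w ∈ Function.fixedPoints T := by
    show T w = w
    have hWi : ∀ i, U i w = w := fun i => Set.mem_iInter.mp hw i
    simp [hT, hWi, ← Finset.sum_smul, hsum]
  have hbound : ∀ z ∈ Function.fixedPoints T,
      ∑ i, ω i * ρ i * ‖U i x - x‖ ^ 2 ≤ 2 * dist x z * ‖T x - x‖ := by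
    intro z hz
    have h := key x z (hFsub hz)
    have hcs : ⟪T x - x, z - x⟫ ≤ ‖T x - x‖ * ‖z - x‖ := real_inner_le_norm _ _
    have hd : dist x z = ‖z - x‖ := by rw [dist_eq_norm, norm_sub_rev]
    rw [hd]
    nlinarith
  by_cases hc : T x = x
  · have hxF : x ∈ Function.fixedPoints T := hc
    have hxi := hFsub hxF
    have : ∀ i, U i x = x := fun i => Set.mem_iInter.mp hxi i
    have hS : ∑ i, ω i * ρ i * ‖U i x - x‖ ^ 2 = 0 := by
      apply Finset.sum_eq_zero; intro i _; simp [this i]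
    rw [ge_iff_le, hS]
    have h1 := Metric.infDist_nonneg (x := x) (s := Function.fixedPoints T)
    have h2 := norm_nonneg ((∑ i, ω i • U i x) - x)
    rw [hT] at h1
    positivity
  · have hc' : 0 < ‖T x - x‖ := norm_pos_iff.mpr (sub_ne_zero.mpr hc)
    have hinf : (∑ i, ω i * ρ i * ‖U i x - x‖ ^ 2) / (2 * ‖T x - x‖)
        ≤ Metric.infDist x (Function.fixedPoints T) := by
      by_contra hlt
      push_neg at hlt
      obtain ⟨z, hz, hdz⟩ := (Metric.infDist_lt_iff ⟨w, hwT⟩).mp hlt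
      have hb := hbound z hz
      rw [lt_div_iff₀ (by positivity)] at hdz
      nlinarith
    rw [ge_iff_le, ← div_le_iff₀ (by positivity : (0:ℝ) < ‖T x - x‖)]
    calc (∑ i, ω i * ρ i * ‖U i x - x‖ ^ 2) / ‖T x - x‖
        = 2 * ((∑ i, ω i * ρ i * ‖U i x - x‖ ^ 2) / (2 * ‖T x - x‖)) := by
          field_simp
      _ ≤ 2 * Metric.infDist x (Function.fixedPoints T) := by linarith
      _ = 2 * Metric.infDist x (Function.fixedPoints fun y => ∑ i, ω i • U i y) := by rw [hT]
end

section
/- Let U_i : H → H be ρ_i-strongly quasi-nonexpansive with ρ_i > 0, i = 1,…,m, with ⋂ Fix U_i ≠ ∅. Set Q_0 := Id and Q_i := U_i ∘ ⋯ ∘ U_1, and U := Q_m. Then for all x ∈ H: 2 d(x, Fix U)·‖U(x) − x‖ ≥ ∑_{i=1}^m ρ_i ‖Q_i(x) − Q_{i−1}(x)‖². -/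
open scoped RealInnerProductSpace

lemma prodSeq_fix' {H : Type*} (U : ℕ → H → H) {m : ℕ} {z : H}
    (hz : ∀ i < m, U i z = z) : ∀ n ≤ m, prodSeq U n z = z := by
  intro n hn
  induction n with
  | zero => rfl
  | succ k ih =>
    have hk : prodSeq U k z = z := ih (le_of_lt hn)
    show U k (prodSeq U k z) = z
    rw [hk]; exact hz k hn

lemma key_telescope {H : Type*} [NormedAddCommGroup H] [InnerProductSpace ℝ H]
    {m : ℕ} (U : ℕ → H → H) (ρ : ℕ → ℝ)
    (hU : ∀ i < m, IsSQNE (U i) (ρ i)) {z : H}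
    (hz : ∀ i < m, z ∈ Function.fixedPoints (U i)) (x : H) :
    ∀ n ≤ m, ∑ i ∈ Finset.range n, ρ i * ‖prodSeq U (i + 1) x - prodSeq U i x‖ ^ 2
      ≤ ‖x - z‖ ^ 2 - ‖prodSeq U n x - z‖ ^ 2 := by
  intro n hn
  induction n with
  | zero => simp [prodSeq]
  | succ k ih =>
    have ihk := ih (le_of_lt hn)
    have hsq := hU k hn (prodSeq U k x) z (hz k hn)
    have he : prodSeq U (k + 1) x = U k (prodSeq U k x) := rfl
    rw [Finset.sum_range_succ, he]
    linarith [hsq]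

lemma fix_prod_subset {H : Type*} [NormedAddCommGroup H] [InnerProductSpace ℝ H]
    {m : ℕ} (U : ℕ → H → H) (ρ : ℕ → ℝ)
    (hρ : ∀ i < m, 0 < ρ i) (hU : ∀ i < m, IsSQNE (U i) (ρ i)) {z : H}
    (hz : ∀ i < m, z ∈ Function.fixedPoints (U i)) {x : H}
    (hx : prodSeq U m x = x) : ∀ i < m, U i x = x := by
  have hsum := key_telescope U ρ hU hz x m le_rfl
  rw [hx] at hsum
  have hnn : ∀ i ∈ Finset.range m, 0 ≤ ρ i * ‖prodSeq U (i + 1) x - prodSeq U i x‖ ^ 2 := by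
    intro i hi
    exact mul_nonneg (le_of_lt (hρ i (Finset.mem_range.mp hi))) (sq_nonneg _)
  have hle : ∑ i ∈ Finset.range m, ρ i * ‖prodSeq U (i + 1) x - prodSeq U i x‖ ^ 2 ≤ 0 := by
    linarith
  have hzero : ∀ i ∈ Finset.range m, ρ i * ‖prodSeq U (i + 1) x - prodSeq U i x‖ ^ 2 = 0 :=
    (Finset.sum_eq_zero_iff_of_nonneg hnn).mp (le_antisymm hle (Finset.sum_nonneg hnn))
  have hstep : ∀ i < m, prodSeq U (i + 1) x = prodSeq U i x := by
    intro i hi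
    have h0 := hzero i (Finset.mem_range.mpr hi)
    have hρi := hρ i hi
    have : ‖prodSeq U (i + 1) x - prodSeq U i x‖ ^ 2 = 0 := by
      rcases mul_eq_zero.mp h0 with h | h
      · exact absurd h (ne_of_gt hρi)
      · exact h
    have := pow_eq_zero_iff (n := 2) (by norm_num) |>.mp this
    have := norm_eq_zero.mp this
    exact sub_eq_zero.mp this
  -- Q_i x = x for all i ≤ m
  have hQ : ∀ i ≤ m, prodSeq U i x = x := by
    intro i hi
    induction i with
    | zero => rfl
    | succ k ihk =>
      have := hstep k hi
      rw [this]
      exact ihk (le_of_lt hi)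
  intro i hi
  have h1 : prodSeq U (i + 1) x = x := hQ (i + 1) hi
  have h2 : prodSeq U i x = x := hQ i (le_of_lt hi)
  have : U i (prodSeq U i x) = x := h1
  rwa [h2] at this

theorem stmt10 {H : Type*} [NormedAddCommGroup H] [InnerProductSpace ℝ H]
    {m : ℕ} (U : ℕ → H → H) (ρ : ℕ → ℝ)
    (hρ : ∀ i < m, 0 < ρ i) (hU : ∀ i < m, IsSQNE (U i) (ρ i))
    (hfix : (⋂ i ∈ Finset.range m, Function.fixedPoints (U i)).Nonempty) :
    ∀ x : H,
      2 * Metric.infDist x (Function.fixedPoints (prodSeq U m)) *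
          ‖prodSeq U m x - x‖ ≥
        ∑ i ∈ Finset.range m, ρ i * ‖prodSeq U (i + 1) x - prodSeq U i x‖ ^ 2 := by
  intro x
  obtain ⟨z0, hz0⟩ := hfix
  have hz0' : ∀ i < m, z0 ∈ Function.fixedPoints (U i) := by
    intro i hi
    have := Set.mem_iInter₂.mp hz0 i (Finset.mem_range.mpr hi)
    exact this
  have hz0fix : z0 ∈ Function.fixedPoints (prodSeq U m) :=
    prodSeq_fix' U (fun i hi => hz0' i hi) m le_rfl
  have hne : (Function.fixedPoints (prodSeq U m)).Nonempty := ⟨z0, hz0fix⟩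
  set c := ‖prodSeq U m x - x‖ with hc
  have hcnn : 0 ≤ c := norm_nonneg _
  -- For any z in fix of product: sum ≤ 2 * ‖x - z‖ * c
  have hbound : ∀ z ∈ Function.fixedPoints (prodSeq U m),
      ∑ i ∈ Finset.range m, ρ i * ‖prodSeq U (i + 1) x - prodSeq U i x‖ ^ 2
        ≤ 2 * ‖x - z‖ * c := by
    intro z hz
    have hzc : ∀ i < m, z ∈ Function.fixedPoints (U i) :=
      fix_prod_subset U ρ hρ hU hz0' hz
    have hsum := key_telescope U ρ hU hzc x m le_rfl
    have htri : ‖x - z‖ ≤ c + ‖prodSeq U m x - z‖ := by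
      calc ‖x - z‖ = ‖(x - prodSeq U m x) + (prodSeq U m x - z)‖ := by
            rw [sub_add_sub_cancel]
        _ ≤ ‖x - prodSeq U m x‖ + ‖prodSeq U m x - z‖ := norm_add_le _ _
        _ = c + ‖prodSeq U m x - z‖ := by rw [hc, norm_sub_rev]
    have h1 : (0:ℝ) ≤ ‖x - z‖ := norm_nonneg _
    have h2 : (0:ℝ) ≤ ‖prodSeq U m x - z‖ := norm_nonneg _
    nlinarith [hsum, htri, h1, h2, hcnn, sq_nonneg (‖x - z‖ - ‖prodSeq U m x - z‖),
      mul_nonneg h1 (show (0:ℝ) ≤ c + ‖prodSeq U m x - z‖ - ‖x - z‖ by linarith)]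
  rcases eq_or_lt_of_le hcnn with h0 | hpos
  · have := hbound z0 hz0fix
    rw [← h0] at this ⊢
    simpa using this
  · set S := ∑ i ∈ Finset.range m, ρ i * ‖prodSeq U (i + 1) x - prodSeq U i x‖ ^ 2 with hS
    have hinf : S / (2 * c) ≤ Metric.infDist x (Function.fixedPoints (prodSeq U m)) := by
      by_contra hcon
      push_neg at hcon
      obtain ⟨z, hz, hlt⟩ := (Metric.infDist_lt_iff hne).mp hcon
      have hb := hbound z hz
      rw [dist_eq_norm] at hlt
      have : S / (2 * c) ≤ ‖x - z‖ := by
        rw [div_le_iff₀ (by positivity)]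
        linarith
      linarith
    have := mul_le_mul_of_nonneg_right hinf (le_of_lt hpos)
    have h2c : S / (2 * c) * c = S / 2 := by
      field_simp
    rw [h2c] at this
    have h3 : S ≤ 2 * Metric.infDist x (Function.fixedPoints (prodSeq U m)) * c := by
      linarith
    exact h3
end

section
/- Let f : H → ℝ be a weakly lower semicontinuous convex function with nonempty sublevel set S := {x ∈ H : f(x) ≤ 0}, and for each x with f(x) > 0 choose g(x) ∈ ∂f(x). Define the subgradient projection P_f by P_f(x) := x − (f(x)/‖g(x)‖²) g(x) if f(x) > 0 and P_f(x) := x otherwise. Then P_f is a cutter and Fix P_f = S. -/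
/-!
With `c = f x / ‖g x‖²` the step is `x - P x = c • g x`, and for every `z` with `f z ≤ 0` the
subgradient inequality gives `⟪z - P x, x - P x⟫ = c (⟪g x, z - x⟫ + c ‖g x‖²) ≤ c f z ≤ 0`.
A point with `f x > 0` cannot be fixed: `g x = 0` would make `x` a minimiser of `f`, contradicting
`f ≤ 0` somewhere.
-/

section SubgradientProjection

variable {H : Type*} [NormedAddCommGroup H] [InnerProductSpace ℝ H]

noncomputable def subgradientProjection (f : H → ℝ) (g : H → H) (x : H) : H :=
  if f x > 0 then x - (f x / ‖g x‖ ^ 2) • g x else x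

variable {f : H → ℝ} {g : H → H}

lemma ne_zero_of_isSubgradient_of_pos {x v : H} (hv : ∀ y, f y ≥ f x + inner ℝ v (y - x))
    (hS : {y | f y ≤ 0}.Nonempty) (hx : 0 < f x) : v ≠ 0 := by
  rintro rfl
  obtain ⟨w, hw : f w ≤ 0⟩ := hS
  have := hv w
  rw [inner_zero_left, add_zero] at this
  linarith

lemma fixedPoints_subgradientProjection (hg : ∀ x, 0 < f x → g x ≠ 0) :
    Function.fixedPoints (subgradientProjection f g) = {x | f x ≤ 0} := by
  ext x
  simp only [Function.mem_fixedPoints, Function.IsFixedPt, subgradientProjection,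
    Set.mem_ofPred_eq]
  split_ifs with hx
  · have hc : f x / ‖g x‖ ^ 2 ≠ 0 := by
      have := hg x hx
      positivity
    simpa [sub_eq_self, hc, hg x hx] using hx
  · simpa using hx

lemma inner_sub_subgradientProjection_nonpos (hg : ∀ x y, f y ≥ f x + inner ℝ (g x) (y - x))
    (x : H) {z : H} (hz : f z ≤ 0) :
    inner ℝ (z - subgradientProjection f g x) (x - subgradientProjection f g x) ≤ (0 : ℝ) := by
  unfold subgradientProjection
  split_ifs with hx
  · set c := f x / ‖g x‖ ^ 2
    have hc : 0 ≤ c := by positivity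
    -- `c ‖g x‖² = f x` unless `g x = 0`, where the division by zero makes `c = 0`.
    have hstep : c * ‖g x‖ ^ 2 ≤ f x := by
      rcases eq_or_ne ‖g x‖ 0 with h | h
      · simpa [h] using hx.le
      · rw [div_mul_cancel₀ _ (pow_ne_zero 2 h)]
    have hsub := hg x z
    have hexpand : inner ℝ (z - (x - c • g x)) (x - (x - c • g x))
        = c * (inner ℝ (g x) (z - x) + c * ‖g x‖ ^ 2) := by
      rw [sub_sub_cancel, ← sub_add, inner_smul_right, inner_add_left, real_inner_smul_left,
        real_inner_comm, real_inner_self_eq_norm_sq]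
    rw [hexpand]
    exact mul_nonpos_of_nonneg_of_nonpos hc (by linarith)
  · simp

theorem isCutter_subgradientProjection (hg : ∀ x y, f y ≥ f x + inner ℝ (g x) (y - x))
    (hS : {x | f x ≤ 0}.Nonempty) : IsCutter (subgradientProjection f g) := by
  intro x z hz
  rw [fixedPoints_subgradientProjection
    fun x hx => ne_zero_of_isSubgradient_of_pos (hg x) hS hx] at hz
  exact inner_sub_subgradientProjection_nonpos hg x hz

end SubgradientProjection

theorem stmt11_general {H : Type*} [NormedAddCommGroup H] [InnerProductSpace ℝ H]
    (f : H → ℝ)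
    (hS : {x : H | f x ≤ 0}.Nonempty)
    (g : H → H) (hg : ∀ x y : H, f y ≥ f x + inner ℝ (g x) (y - x)) :
    IsCutter (fun x => if f x > 0 then x - (f x / ‖g x‖ ^ 2) • g x else x) ∧
      Function.fixedPoints (fun x => if f x > 0 then x - (f x / ‖g x‖ ^ 2) • g x else x) =
        {x : H | f x ≤ 0} :=
  ⟨isCutter_subgradientProjection hg hS,
    fixedPoints_subgradientProjection fun x hx => ne_zero_of_isSubgradient_of_pos (hg x) hS hx⟩

theorem stmt11 {H : Type*} [NormedAddCommGroup H] [InnerProductSpace ℝ H]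
    (f : H → ℝ) (hconv : ConvexOn ℝ Set.univ f)
    (hwlsc : LowerSemicontinuous fun x : WeakSpace ℝ H => f x)
    (hS : {x : H | f x ≤ 0}.Nonempty)
    (g : H → H) (hg : ∀ x y : H, f y ≥ f x + inner ℝ (g x) (y - x)) :
    IsCutter (fun x => if f x > 0 then x - (f x / ‖g x‖ ^ 2) • g x else x) ∧
      Function.fixedPoints (fun x => if f x > 0 then x - (f x / ‖g x‖ ^ 2) • g x else x) =
        {x : H | f x ≤ 0} :=
  stmt11_general f hS g hg
end

section
/- Let A : H1 → H2 be a nonzero bounded linear operator, V : H2 → H2 a ρ-SQNE operator with ρ ≥ 0 and R(A) ∩ Fix V ≠ ∅. Then the Landweber operator L{V}(x) := x + (1/‖A‖²) A*(V(Ax) − Ax) is ρ-SQNE and Fix L{V} = A^{-1}(Fix V). -/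
open scoped Classical

variable {H1 H2 : Type*} [NormedAddCommGroup H1] [InnerProductSpace ℝ H1]
  [NormedAddCommGroup H2] [InnerProductSpace ℝ H2] [CompleteSpace H1] [CompleteSpace H2]

/-- The extrapolated Landweber operator corresponding to `V` and the
extrapolation functional `σ`. -/
noncomputable def Landweber (A : H1 →L[ℝ] H2) (σ : H1 → ℝ) (V : H2 → H2) : H1 → H1 :=
  fun x => x + (σ x / ‖A‖ ^ 2) • (ContinuousLinearMap.adjoint A) (V (A x) - A x)

/-- The maximal extrapolation functional `τ`. -/
noncomputable def tauFun (A : H1 →L[ℝ] H2) (V : H2 → H2) : H1 → ℝ :=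
  fun x =>
    if V (A x) ≠ A x then
      (‖A‖ * ‖V (A x) - A x‖ / ‖(ContinuousLinearMap.adjoint A) (V (A x) - A x)‖) ^ 2
    else 1

set_option maxHeartbeats 1000000 in
open scoped RealInnerProductSpace in
theorem stmt13 (A : H1 →L[ℝ] H2) (hA : A ≠ 0) (V : H2 → H2) (ρ : ℝ) (hρ : 0 ≤ ρ)
    (hV : IsSQNE V ρ) (hfix : (Set.range A ∩ Function.fixedPoints V).Nonempty) :
    IsSQNE (Landweber A (fun _ => 1) V) ρ ∧
      Function.fixedPoints (Landweber A (fun _ => 1) V) =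
        A ⁻¹' Function.fixedPoints V := by
  have hAn : (0:ℝ) < ‖A‖ := norm_pos_iff.mpr hA
  have hc : (1 : ℝ) / ‖A‖ ^ 2 * ‖A‖ ^ 2 = 1 := by
    field_simp
  have hcpos : (0:ℝ) < 1 / ‖A‖ ^ 2 := by positivity
  -- fixed point characterization
  have hfixL : ∀ x : H1, Landweber A (fun _ => 1) V x = x ↔ V (A x) = A x := by
    intro x
    constructor
    · intro h
      have h0 : ((1:ℝ) / ‖A‖ ^ 2) • (ContinuousLinearMap.adjoint A) (V (A x) - A x) = 0 := by
        have := h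
        unfold Landweber at this
        simpa using (add_eq_left.mp this)
      have hAu : (ContinuousLinearMap.adjoint A) (V (A x) - A x) = 0 := by
        rcases smul_eq_zero.mp h0 with h1 | h1
        · exact absurd h1 (ne_of_gt hcpos)
        · exact h1
      obtain ⟨z, ⟨w, rfl⟩, hzfix⟩ := hfix
      have hinner : ⟪V (A x) - A x, A x - A w⟫ = 0 := by
        have h2 : ⟪(ContinuousLinearMap.adjoint A) (V (A x) - A x), x - w⟫
            = ⟪V (A x) - A x, A (x - w)⟫ :=
          ContinuousLinearMap.adjoint_inner_left A _ _
        rw [hAu, inner_zero_left, map_sub] at h2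
        exact h2.symm
      have hexp : ‖V (A x) - A w‖ ^ 2
          = ‖V (A x) - A x‖ ^ 2 + 2 * ⟪V (A x) - A x, A x - A w⟫ + ‖A x - A w‖ ^ 2 := by
        rw [← sub_add_sub_cancel (V (A x)) (A x) (A w), norm_add_sq_real]
      have hS := hV (A x) (A w) hzfix
      have hu2 : ‖V (A x) - A x‖ ^ 2 ≤ 0 := by nlinarith [sq_nonneg ‖V (A x) - A x‖]
      have : V (A x) - A x = 0 := by
        have := le_antisymm hu2 (sq_nonneg _)
        have hnn : ‖V (A x) - A x‖ = 0 := by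
          nlinarith [norm_nonneg (V (A x) - A x)]
        exact norm_eq_zero.mp hnn
      exact sub_eq_zero.mp this
    · intro h
      unfold Landweber
      simp [h]
  refine ⟨?_, ?_⟩
  · -- SQNE
    intro x z hz
    have hz' : V (A z) = A z := (hfixL z).mp hz
    set u := V (A x) - A x with hu
    have hS := hV (A x) (A z) hz'
    have hexp : ‖V (A x) - A z‖ ^ 2
        = ‖u‖ ^ 2 + 2 * ⟪u, A x - A z⟫ + ‖A x - A z‖ ^ 2 := by
      rw [hu, ← sub_add_sub_cancel (V (A x)) (A x) (A z), norm_add_sq_real]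
    have hip : 2 * ⟪u, A x - A z⟫ ≤ -(1 + ρ) * ‖u‖ ^ 2 := by nlinarith
    have hadj : ⟪(ContinuousLinearMap.adjoint A) u, x - z⟫ = ⟪u, A x - A z⟫ := by
      rw [ContinuousLinearMap.adjoint_inner_left, map_sub]
    have hAu : ‖(ContinuousLinearMap.adjoint A) u‖ ^ 2 ≤ ‖A‖ ^ 2 * ‖u‖ ^ 2 := by
      have h1 : ‖(ContinuousLinearMap.adjoint A) u‖ ≤ ‖ContinuousLinearMap.adjoint A‖ * ‖u‖ :=
        (ContinuousLinearMap.adjoint A).le_opNorm u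
      have h2 : ‖ContinuousLinearMap.adjoint A‖ = ‖A‖ :=
        LinearIsometryEquiv.norm_map _ A
      rw [h2] at h1
      nlinarith [norm_nonneg ((ContinuousLinearMap.adjoint A) u), norm_nonneg u, norm_nonneg A]
    have hLx : Landweber A (fun _ => 1) V x - z
        = (x - z) + ((1:ℝ) / ‖A‖ ^ 2) • (ContinuousLinearMap.adjoint A) u := by
      unfold Landweber
      abel
    have hLxx : Landweber A (fun _ => 1) V x - x
        = ((1:ℝ) / ‖A‖ ^ 2) • (ContinuousLinearMap.adjoint A) u := by
      unfold Landweber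
      abel
    rw [hLx, hLxx, norm_add_sq_real, norm_smul, real_inner_smul_right]
    simp only [Real.norm_eq_abs, abs_of_pos hcpos]
    rw [real_inner_comm, hadj]
    set c : ℝ := 1 / ‖A‖ ^ 2 with hcdef
    set nu := ‖u‖ with hnu
    set nAu := ‖(ContinuousLinearMap.adjoint A) u‖ with hnAu
    set ip := ⟪u, A x - A z⟫ with hipdef
    -- goal: ‖x-z‖^2 + 2*(c*ip) + (c*nAu)^2 ≤ ‖x-z‖^2 - ρ*(c*nAu)^2
    have k1 : c * (2 * ip) ≤ c * (-(1 + ρ) * nu ^ 2) :=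
      mul_le_mul_of_nonneg_left hip hcpos.le
    have k2 : (1 + ρ) * (c ^ 2 * nAu ^ 2) ≤ (1 + ρ) * (c ^ 2 * (‖A‖ ^ 2 * nu ^ 2)) := by
      have := mul_le_mul_of_nonneg_left hAu (sq_nonneg c)
      exact mul_le_mul_of_nonneg_left this (by linarith)
    have k3 : c ^ 2 * ‖A‖ ^ 2 = c := by
      have h := hc
      linear_combination c * h
    have e1 : (1 + ρ) * (c * nAu) ^ 2 ≤ (1 + ρ) * c * nu ^ 2 := by
      calc (1 + ρ) * (c * nAu) ^ 2 = (1 + ρ) * (c ^ 2 * nAu ^ 2) := by ring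
        _ ≤ (1 + ρ) * (c ^ 2 * (‖A‖ ^ 2 * nu ^ 2)) := k2
        _ = c ^ 2 * ‖A‖ ^ 2 * ((1 + ρ) * nu ^ 2) := by ring
        _ = c * ((1 + ρ) * nu ^ 2) := by rw [k3]
        _ = (1 + ρ) * c * nu ^ 2 := by ring
    have e2 : 2 * (c * ip) ≤ -((1 + ρ) * c * nu ^ 2) := by
      calc 2 * (c * ip) = c * (2 * ip) := by ring
        _ ≤ c * (-(1 + ρ) * nu ^ 2) := k1
        _ = -((1 + ρ) * c * nu ^ 2) := by ring
    have key : 2 * (c * ip) + (c * nAu) ^ 2 + ρ * (c * nAu) ^ 2 ≤ 0 := by nlinarith [e1, e2]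
    linarith [key]
  · ext x
    simp only [Function.mem_fixedPoints, Function.IsFixedPt, Set.mem_preimage]
    exact hfixL x
end

section
/- Let A : H1 → H2 be nonzero bounded linear, V : H2 → H2 ρ-SQNE with ρ ≥ 0 and R(A) ∩ Fix V ≠ ∅, and let σ : H1 → [1,∞) satisfy 1 ≤ σ(x) ≤ τ(x), where τ(x) := (‖A‖·‖V(Ax) − Ax‖ / ‖A*(V(Ax) − Ax)‖)² when V(Ax) ≠ Ax and τ(x) := 1 otherwise. Then the extrapolated Landweber operator L_σ{V}(x) := x + (σ(x)/‖A‖²) A*(V(Ax) − Ax) is ρ-SQNE with Fix L_σ{V} = A^{-1}(Fix V). -/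
open scoped Classical

variable {H1 H2 : Type*} [NormedAddCommGroup H1] [InnerProductSpace ℝ H1]
  [NormedAddCommGroup H2] [InnerProductSpace ℝ H2] [CompleteSpace H1] [CompleteSpace H2]

open scoped RealInnerProductSpace

theorem stmt14 (A : H1 →L[ℝ] H2) (hA : A ≠ 0) (V : H2 → H2) (ρ : ℝ) (hρ : 0 ≤ ρ)
    (hV : IsSQNE V ρ) (hfix : (Set.range A ∩ Function.fixedPoints V).Nonempty)
    (σ : H1 → ℝ) (hσ : ∀ x, 1 ≤ σ x ∧ σ x ≤ tauFun A V x) :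
    IsSQNE (Landweber A σ V) ρ ∧
      Function.fixedPoints (Landweber A σ V) = A ⁻¹' Function.fixedPoints V := by
  obtain ⟨y0, ⟨w0, hw0⟩, hy0fix⟩ := hfix
  have hAnorm : (0:ℝ) < ‖A‖ := norm_pos_iff.mpr hA
  -- key inner product estimate
  have key : ∀ x : H1, ∀ z : H2, z ∈ Function.fixedPoints V →
      2 * ⟪V (A x) - A x, A x - z⟫ ≤ -(1+ρ) * ‖V (A x) - A x‖^2 := by
    intro x z hz
    have h := hV (A x) z hz
    have hexp : ‖V (A x) - z‖^2
        = ‖A x - z‖^2 + 2 * ⟪A x - z, V (A x) - A x⟫ + ‖V (A x) - A x‖^2 := by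
      have h2 : V (A x) - z = (A x - z) + (V (A x) - A x) := by abel
      rw [h2, norm_add_sq_real]
    rw [real_inner_comm]
    linarith
  -- if the adjoint kills the residual, the residual vanishes
  have adj_zero : ∀ x : H1,
      (ContinuousLinearMap.adjoint A) (V (A x) - A x) = 0 → V (A x) = A x := by
    intro x h0
    have h1 : ⟪V (A x) - A x, A x - y0⟫ = 0 := by
      have : ⟪(ContinuousLinearMap.adjoint A) (V (A x) - A x), x - w0⟫
          = ⟪V (A x) - A x, A (x - w0)⟫ := ContinuousLinearMap.adjoint_inner_left A _ _
      rw [h0, inner_zero_left] at this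
      rw [map_sub, hw0] at this
      exact this.symm
    have h2 := key x y0 hy0fix
    rw [h1] at h2
    have h3 : ‖V (A x) - A x‖^2 ≤ 0 := by nlinarith
    have h4 : ‖V (A x) - A x‖ = 0 := by nlinarith [norm_nonneg (V (A x) - A x)]
    have := norm_eq_zero.mp h4
    exact sub_eq_zero.mp this
  -- characterization of fixed points
  have hfixL : ∀ x : H1, Landweber A σ V x = x ↔ V (A x) = A x := by
    intro x
    constructor
    · intro h
      have h0 : (σ x / ‖A‖^2) • (ContinuousLinearMap.adjoint A) (V (A x) - A x) = 0 := by
        have := h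
        unfold Landweber at this
        exact add_eq_left.mp this
      have hs : σ x / ‖A‖^2 ≠ 0 := by
        have h1 := (hσ x).1
        positivity
      have := (smul_eq_zero.mp h0).resolve_left hs
      exact adj_zero x this
    · intro h
      unfold Landweber
      rw [h, sub_self, map_zero, smul_zero, add_zero]
  constructor
  · -- SQNE
    intro x z hz
    have hAz : A z ∈ Function.fixedPoints V := (hfixL z).mp hz
    by_cases hu : V (A x) = A x
    · have hLx : Landweber A σ V x = x := (hfixL x).mpr hu
      rw [hLx]
      simp
    · set u := V (A x) - A x with hu_def
      set v := (ContinuousLinearMap.adjoint A) u with hv_def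
      have hvne : v ≠ 0 := fun h => hu (adj_zero x h)
      have hvpos : (0:ℝ) < ‖v‖ := norm_pos_iff.mpr hvne
      set s := σ x / ‖A‖^2 with hs_def
      have hs_pos : 0 < s := by
        have h1 := (hσ x).1
        positivity
      have hLz : Landweber A σ V x - z = (x - z) + s • v := by
        unfold Landweber; abel
      have hLxx : Landweber A σ V x - x = s • v := by
        unfold Landweber; abel
      have hexp : ‖Landweber A σ V x - z‖^2
          = ‖x - z‖^2 + 2 * (s * ⟪A x - A z, u⟫) + s^2 * ‖v‖^2 := by
        rw [hLz, norm_add_sq_real]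
        have h1 : ⟪x - z, s • v⟫ = s * ⟪A x - A z, u⟫ := by
          rw [real_inner_smul_right]
          congr 1
          rw [hv_def, ContinuousLinearMap.adjoint_inner_right, map_sub]
        have h2 : ‖s • v‖^2 = s^2 * ‖v‖^2 := by
          rw [norm_smul, mul_pow, Real.norm_eq_abs, sq_abs]
        rw [h1, h2]
      have hkey := key x (A z) hAz
      rw [real_inner_comm] at hkey
      -- tau bound
      have hτ := (hσ x).2
      rw [tauFun, if_pos hu] at hτ
      have h1 : σ x * ‖v‖^2 ≤ ‖A‖^2 * ‖u‖^2 := by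
        rw [div_pow] at hτ
        have := (le_div_iff₀ (pow_pos hvpos 2)).mp hτ
        calc σ x * ‖v‖^2 ≤ (‖A‖ * ‖u‖)^2 := this
          _ = ‖A‖^2 * ‖u‖^2 := by ring
      have hsv : s * ‖v‖^2 ≤ ‖u‖^2 := by
        rw [hs_def, div_mul_eq_mul_div, div_le_iff₀ (pow_pos hAnorm 2)]
        linarith [h1]
      rw [hexp, hLxx]
      have h2 : ‖s • v‖^2 = s^2 * ‖v‖^2 := by
        rw [norm_smul, mul_pow, Real.norm_eq_abs, sq_abs]
      rw [h2]
      nlinarith [mul_le_mul_of_nonneg_left hkey (le_of_lt hs_pos),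
        mul_le_mul_of_nonneg_left hsv (mul_nonneg (add_nonneg zero_le_one hρ) hs_pos.le),
        sq_nonneg (‖v‖), hs_pos, hρ]
  · ext x
    simp only [Function.mem_fixedPoints, Function.IsFixedPt, Set.mem_preimage]
    exact hfixL x
end

section
/- Let A : H1 → H2 be nonzero bounded linear, V : H2 → H2 ρ-SQNE with ρ ≥ 0 and R(A) ∩ Fix V ≠ ∅, and 1 ≤ σ ≤ τ an extrapolation functional. Then for all x ∈ H1: 2 d(x, Fix L_σ{V}) · ‖L_σ{V}(x) − x‖ ≥ ((ρ+1)/‖A‖²) ‖V(Ax) − Ax‖². -/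
open scoped Classical

variable {H1 H2 : Type*} [NormedAddCommGroup H1] [InnerProductSpace ℝ H1]
  [NormedAddCommGroup H2] [InnerProductSpace ℝ H2] [CompleteSpace H1] [CompleteSpace H2]

open scoped InnerProductSpace

/-- Any fixed point of the extrapolated Landweber operator maps to a fixed point of `V`. -/
lemma fix_landweber_aux (A : H1 →L[ℝ] H2) (hA : A ≠ 0) (V : H2 → H2)
    (σ : H1 → ℝ) (hσ : ∀ x, 1 ≤ σ x ∧ σ x ≤ tauFun A V x) {z : H1}
    (hz : Landweber A σ V z = z) : V (A z) = A z := by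
  by_contra h
  have hAn : (0:ℝ) < ‖A‖ := norm_pos_iff.mpr hA
  have hc : (0:ℝ) < σ z / ‖A‖ ^ 2 := by
    have := (hσ z).1
    positivity
  have h0 : (σ z / ‖A‖ ^ 2) • (ContinuousLinearMap.adjoint A) (V (A z) - A z) = 0 := by
    have h' := hz
    unfold Landweber at h'
    exact add_eq_left.mp h'
  have hw : (ContinuousLinearMap.adjoint A) (V (A z) - A z) = 0 := by
    rcases smul_eq_zero.mp h0 with h' | h'
    · exact absurd h' (ne_of_gt hc)
    · exact h'
  have hτ : tauFun A V z = 0 := by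
    unfold tauFun
    rw [if_pos h, hw]
    simp
  have := (hσ z).2
  have := (hσ z).1
  rw [hτ] at *
  linarith

theorem stmt15 (A : H1 →L[ℝ] H2) (hA : A ≠ 0) (V : H2 → H2) (ρ : ℝ) (hρ : 0 ≤ ρ)
    (hV : IsSQNE V ρ) (hfix : (Set.range A ∩ Function.fixedPoints V).Nonempty)
    (σ : H1 → ℝ) (hσ : ∀ x, 1 ≤ σ x ∧ σ x ≤ tauFun A V x) :
    ∀ x : H1,
      2 * Metric.infDist x (Function.fixedPoints (Landweber A σ V)) *
          ‖Landweber A σ V x - x‖ ≥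
        ((ρ + 1) / ‖A‖ ^ 2) * ‖V (A x) - A x‖ ^ 2 := by
  intro x
  have hAn : (0:ℝ) < ‖A‖ := norm_pos_iff.mpr hA
  set L := Landweber A σ V with hL
  set S := Function.fixedPoints L with hS
  -- S is nonempty
  obtain ⟨w, ⟨y, hy⟩, hwfix⟩ := hfix
  have hyS : y ∈ S := by
    simp only [hS, Function.mem_fixedPoints, Function.IsFixedPt, hL, Landweber]
    rw [hy, hwfix]
    simp
  set u := V (A x) - A x with hu
  -- key: for any z ∈ S, 2 * dist x z * ‖L x - x‖ ≥ RHS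
  have key : ∀ z ∈ S, ((ρ + 1) / ‖A‖ ^ 2) * ‖u‖ ^ 2 ≤ 2 * dist x z * ‖L x - x‖ := by
    intro z hz
    have hzV : V (A z) = A z := fix_landweber_aux A hA V σ hσ hz
    -- SQNE inequality
    have hsq := hV (A x) (A z) hzV
    have hexp : ‖V (A x) - A z‖ ^ 2 = ‖A x - A z‖ ^ 2 + 2 * ⟪A x - A z, u⟫_ℝ + ‖u‖ ^ 2 := by
      have : V (A x) - A z = (A x - A z) + u := by rw [hu]; abel
      rw [this, @norm_add_sq_real]
    have hkey2 : (ρ + 1) * ‖u‖ ^ 2 ≤ 2 * ⟪A z - A x, u⟫_ℝ := by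
      have h1 : ⟪A z - A x, u⟫_ℝ = - ⟪A x - A z, u⟫_ℝ := by
        rw [← inner_neg_left, neg_sub]
      rw [h1]
      nlinarith [hsq, hexp]
    -- L x - x
    have hLx : L x - x = (σ x / ‖A‖ ^ 2) • (ContinuousLinearMap.adjoint A) u := by
      simp only [hL, Landweber, hu]; abel
    have hinner : ⟪z - x, L x - x⟫_ℝ = (σ x / ‖A‖ ^ 2) * ⟪A z - A x, u⟫_ℝ := by
      rw [hLx, real_inner_smul_right, ContinuousLinearMap.adjoint_inner_right, map_sub]
    have hσ1 : 1 ≤ σ x := (hσ x).1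
    have hiu : 0 ≤ ⟪A z - A x, u⟫_ℝ := by nlinarith [hkey2, sq_nonneg ‖u‖]
    have hbound : ((ρ + 1) / ‖A‖ ^ 2) * ‖u‖ ^ 2 ≤ 2 * ⟪z - x, L x - x⟫_ℝ := by
      rw [hinner]
      have hA2 : (0:ℝ) < ‖A‖ ^ 2 := by positivity
      have h2 : (ρ + 1) * ‖u‖ ^ 2 ≤ 2 * (σ x * ⟪A z - A x, u⟫_ℝ) := by nlinarith
      calc ((ρ + 1) / ‖A‖ ^ 2) * ‖u‖ ^ 2 = ((ρ + 1) * ‖u‖ ^ 2) / ‖A‖ ^ 2 := by ring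
        _ ≤ (2 * (σ x * ⟪A z - A x, u⟫_ℝ)) / ‖A‖ ^ 2 := by gcongr
        _ = 2 * (σ x / ‖A‖ ^ 2 * ⟪A z - A x, u⟫_ℝ) := by ring
    have hcs : ⟪z - x, L x - x⟫_ℝ ≤ ‖z - x‖ * ‖L x - x‖ := real_inner_le_norm _ _
    have hd : ‖z - x‖ = dist x z := by rw [dist_eq_norm, norm_sub_rev]
    calc ((ρ + 1) / ‖A‖ ^ 2) * ‖u‖ ^ 2 ≤ 2 * ⟪z - x, L x - x⟫_ℝ := hbound
      _ ≤ 2 * (‖z - x‖ * ‖L x - x‖) := by linarith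
      _ = 2 * dist x z * ‖L x - x‖ := by rw [hd]; ring
  by_cases hn : L x = x
  · -- degenerate case: u = 0
    have hzV : V (A x) = A x := fix_landweber_aux A hA V σ hσ hn
    have : u = 0 := by rw [hu, hzV, sub_self]
    rw [ge_iff_le]
    simp [this, hn]
  · have hnp : (0:ℝ) < ‖L x - x‖ := by
      rw [norm_pos_iff]; intro h; exact hn (sub_eq_zero.mp h)
    have hinf : ((ρ + 1) / ‖A‖ ^ 2) * ‖u‖ ^ 2 / (2 * ‖L x - x‖) ≤ Metric.infDist x S := by
      refine le_of_not_gt fun hlt => ?_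
      obtain ⟨z, hz, hd⟩ := (Metric.infDist_lt_iff ⟨y, hyS⟩).mp hlt
      rw [lt_div_iff₀ (by positivity)] at hd
      have hk := key z hz
      nlinarith [hk, hd]
    rw [ge_iff_le]
    rw [div_le_iff₀ (by positivity : (0:ℝ) < 2 * ‖L x - x‖)] at hinf
    linarith [hinf]
end

section
/- Let q : H2 → ℝ be weakly lower semicontinuous and convex with subgradient selection h(y) ∈ ∂q(y), let A : H1 → H2 be nonzero bounded linear, and suppose q(Az₀) ≤ 0 for some z₀ ∈ H1. Fix u ∈ H1 with q(Au) > 0. Then the half-space H := {z ∈ H1 : ⟨u − L_τ{P_q}(u), z − L_τ{P_q}(u)⟩ ≤ 0} equals {z ∈ H1 : q(Au) + ⟨A* h(Au), z − u⟩ ≤ 0}. -/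
open scoped Classical

variable {H1 H2 : Type*} [NormedAddCommGroup H1] [InnerProductSpace ℝ H1]
  [NormedAddCommGroup H2] [InnerProductSpace ℝ H2] [CompleteSpace H1] [CompleteSpace H2]

/-- The subgradient projection associated with `q` and the subgradient
selection `h`. -/
noncomputable def subgradProj {H : Type*} [NormedAddCommGroup H]
    [InnerProductSpace ℝ H] (q : H → ℝ) (h : H → H) : H → H :=
  fun y => if q y > 0 then y - (q y / ‖h y‖ ^ 2) • h y else y

/-!
Write `g = A* h(Au)` and `Q = q(Au) > 0`. The subgradient inequality at `Au`, evaluated at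
`Az₀`, gives `⟪g, z₀ - u⟫ ≤ q(Az₀) - Q < 0`, so `g ≠ 0`. The residual `P_q(Au) - Au` is a negative
multiple of `h(Au)`, and the maximal extrapolation `τ` rescales the Landweber step so that
`L_τ{P_q}(u) = u - (Q / ‖g‖²) g`, the metric projection of `u` onto the half-space
`{z | Q + ⟪g, z - u⟫ ≤ 0}`; a projection onto a half-space recovers the half-space through
its obtuse-angle characterisation.
-/

open ContinuousLinearMap

theorem subgradProj_sub_self_of_pos {H : Type*} [NormedAddCommGroup H] [InnerProductSpace ℝ H]
    {q : H → ℝ} (h : H → H) {y : H} (hy : 0 < q y) :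
    subgradProj q h y - y = -((q y / ‖h y‖ ^ 2) • h y) := by
  rw [subgradProj, if_pos hy]
  abel

theorem landweber_tauFun_eq (A : H1 →L[ℝ] H2) (V : H2 → H2) {x : H1}
    (hr : adjoint A (V (A x) - A x) ≠ 0) :
    Landweber A (tauFun A V) V x =
      x + (‖V (A x) - A x‖ ^ 2 / ‖adjoint A (V (A x) - A x)‖ ^ 2) •
        adjoint A (V (A x) - A x) := by
  have hVx : V (A x) ≠ A x := fun hfix => hr (by rw [hfix, sub_self, map_zero])
  have hA : ‖A‖ ≠ 0 := by
    rw [norm_ne_zero_iff]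
    rintro rfl
    exact hr (by rw [LinearIsometryEquiv.map_zero, zero_apply])
  have hAr : ‖adjoint A (V (A x) - A x)‖ ≠ 0 := norm_ne_zero_iff.mpr hr
  rw [Landweber, tauFun, if_pos hVx]
  congr 2
  field_simp

theorem adjoint_apply_subgradient_ne_zero (A : H1 →L[ℝ] H2) {q : H2 → ℝ} {h : H2 → H2}
    (hh : ∀ y w : H2, q w ≥ q y + inner ℝ (h y) (w - y))
    {z₀ u : H1} (hz₀ : q (A z₀) ≤ 0) (hu : 0 < q (A u)) :
    adjoint A (h (A u)) ≠ 0 := by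
  intro hg
  have hsub := hh (A u) (A z₀)
  rw [← map_sub, ← adjoint_inner_left, hg, inner_zero_left] at hsub
  linarith

theorem landweber_subgradProj_eq (A : H1 →L[ℝ] H2) {q : H2 → ℝ} (h : H2 → H2) {u : H1}
    (hu : 0 < q (A u)) (hg : adjoint A (h (A u)) ≠ 0) :
    Landweber A (tauFun A (subgradProj q h)) (subgradProj q h) u =
      u - (q (A u) / ‖adjoint A (h (A u))‖ ^ 2) • adjoint A (h (A u)) := by
  have hhn : ‖h (A u)‖ ≠ 0 := norm_ne_zero_iff.mpr fun h0 => hg (by rw [h0, map_zero])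
  have hgn : ‖adjoint A (h (A u))‖ ≠ 0 := norm_ne_zero_iff.mpr hg
  have hres := subgradProj_sub_self_of_pos h hu
  set a := q (A u) / ‖h (A u)‖ ^ 2 with ha
  have ha0 : 0 < a := div_pos hu (by positivity)
  have hAres : adjoint A (subgradProj q h (A u) - A u) = -(a • adjoint A (h (A u))) := by
    rw [hres, map_neg, map_smul]
  rw [landweber_tauFun_eq A _ (by rw [hAres]; exact neg_ne_zero.mpr (smul_ne_zero ha0.ne' hg)),
    hAres, hres, norm_neg, norm_neg, norm_smul, norm_smul, Real.norm_of_nonneg ha0.le, smul_neg,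
    smul_smul, ← sub_eq_add_neg]
  congr 2
  rw [ha]
  field_simp

theorem setOf_inner_sub_proj_le_zero_eq {E : Type*} [NormedAddCommGroup E]
    [InnerProductSpace ℝ E] {g : E} (hg : g ≠ 0) {Q : ℝ} (hQ : 0 < Q) (u : E) :
    {z : E | inner ℝ (u - (u - (Q / ‖g‖ ^ 2) • g)) (z - (u - (Q / ‖g‖ ^ 2) • g)) ≤ (0 : ℝ)} =
      {z : E | Q + inner ℝ g (z - u) ≤ (0 : ℝ)} := by
  have hgn : ‖g‖ ≠ 0 := norm_ne_zero_iff.mpr hg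
  set c := Q / ‖g‖ ^ 2 with hc
  have hc0 : 0 < c := div_pos hQ (by positivity)
  have hcg : c * ‖g‖ ^ 2 = Q := by rw [hc]; field_simp
  ext z
  have hexpand : inner ℝ (u - (u - c • g)) (z - (u - c • g)) = c * (Q + inner ℝ g (z - u)) := by
    rw [sub_sub_cancel, sub_sub_eq_add_sub, add_sub_right_comm, inner_add_right,
      real_inner_smul_left, real_inner_smul_left, real_inner_smul_right,
      real_inner_self_eq_norm_sq, ← hcg]
    ring
  rw [Set.mem_ofPred_eq, Set.mem_ofPred_eq, hexpand, ← mul_zero c, mul_le_mul_iff_right₀ hc0, mul_zero]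

theorem stmt18_general (A : H1 →L[ℝ] H2)
    (q : H2 → ℝ)
    (h : H2 → H2) (hh : ∀ y w : H2, q w ≥ q y + inner ℝ (h y) (w - y))
    (z₀ : H1) (hz₀ : q (A z₀) ≤ 0) (u : H1) (hu : 0 < q (A u)) :
    {z : H1 | inner ℝ (u - Landweber A (tauFun A (subgradProj q h)) (subgradProj q h) u)
        (z - Landweber A (tauFun A (subgradProj q h)) (subgradProj q h) u) ≤ (0 : ℝ)} =
      {z : H1 | q (A u) + inner ℝ ((ContinuousLinearMap.adjoint A) (h (A u))) (z - u) ≤ (0 : ℝ)} := by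
  have hg := adjoint_apply_subgradient_ne_zero A hh hz₀ hu
  rw [landweber_subgradProj_eq A h hu hg]
  exact setOf_inner_sub_proj_le_zero_eq hg hu u

theorem stmt18 (A : H1 →L[ℝ] H2) (hA : A ≠ 0)
    (q : H2 → ℝ) (hconv : ConvexOn ℝ Set.univ q)
    (hwlsc : LowerSemicontinuous fun y : WeakSpace ℝ H2 => q y)
    (h : H2 → H2) (hh : ∀ y w : H2, q w ≥ q y + inner ℝ (h y) (w - y))
    (z₀ : H1) (hz₀ : q (A z₀) ≤ 0) (u : H1) (hu : 0 < q (A u)) :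
    {z : H1 | inner ℝ (u - Landweber A (tauFun A (subgradProj q h)) (subgradProj q h) u)
        (z - Landweber A (tauFun A (subgradProj q h)) (subgradProj q h) u) ≤ (0 : ℝ)} =
      {z : H1 | q (A u) + inner ℝ ((ContinuousLinearMap.adjoint A) (h (A u))) (z - u) ≤ (0 : ℝ)} :=
  stmt18_general A q h hh z₀ hz₀ u hu
end

section
/- Let H be a real Hilbert space and let C_1, …, C_m ⊆ H be half-spaces (sets of the form {x : ⟨a_i, x⟩ ≤ β_i} with a_i ≠ 0) with nonempty intersection C. Then the family {C_1, …, C_m} is boundedly regular: for every bounded sequence {x_k} ⊆ H, if max_i d(x_k, C_i) → 0 then d(x_k, C) → 0. -/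
/-!
The normals `a i` span a finite-dimensional subspace `V`, and each half-space is the preimage under
the orthogonal projection `P` onto `V` of a closed half-space of `V`. Distances to such cylinders
are distances of the projected points, so the problem descends to `V`, where `P ∘ x` is bounded.
In a proper space every family of closed sets is boundedly regular: a subsequence of `P ∘ x`
converges to a point lying in every set, hence in the intersection.
-/

open Set Filter Metric Topology

theorem Metric.tendsto_infDist_iInter_of_tendsto_infDist {X ι : Type*} [PseudoMetricSpace X]
    [ProperSpace X] {C : ι → Set X} (hC : ∀ i, IsClosed (C i)) {x : ℕ → X}
    (hx : Bornology.IsBounded (range x))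
    (h : ∀ i, Tendsto (fun k ↦ infDist (x k) (C i)) atTop (𝓝 0)) :
    Tendsto (fun k ↦ infDist (x k) (⋂ i, C i)) atTop (𝓝 0) := by
  rcases (⋂ i, C i).eq_empty_or_nonempty with hempty | hne
  · simp [hempty]
  refine tendsto_of_subseq_tendsto fun ns hns ↦ ?_
  obtain ⟨y, -, φ, hφ, hy⟩ :=
    hx.isCompact_closure.tendsto_subseq fun k ↦ subset_closure (mem_range_self (ns k))
  have hyC : y ∈ ⋂ i, C i := by
    refine mem_iInter.2 fun i ↦ ((hC i).mem_iff_infDist_zero (hne.mono (iInter_subset _ i))).2 ?_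
    exact tendsto_nhds_unique ((continuous_infDist_pt _).continuousAt.tendsto.comp hy)
      ((h i).comp (hns.comp hφ.tendsto_atTop))
  exact ⟨φ, squeeze_zero (fun _ ↦ infDist_nonneg) (fun k ↦ infDist_le_dist_of_mem hyC)
    (tendsto_iff_dist_tendsto_zero.1 hy)⟩

namespace Submodule

section RCLike

variable {𝕜 E : Type*} [RCLike 𝕜] [NormedAddCommGroup E] [InnerProductSpace 𝕜 E]
  (K : Submodule 𝕜 E) [K.HasOrthogonalProjection]

theorem infDist_preimage_orthogonalProjectionOnto (D : Set K) (x : E) :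
    infDist x (K.orthogonalProjectionOnto ⁻¹' D) = infDist (K.orthogonalProjectionOnto x) D := by
  set P := K.orthogonalProjectionOnto
  rcases D.eq_empty_or_nonempty with rfl | hD
  · simp
  have hPD : (P ⁻¹' D).Nonempty := by
    obtain ⟨d, hd⟩ := hD
    exact ⟨d, by simpa [P] using hd⟩
  refine le_antisymm ((le_infDist hD).2 fun d hd ↦ ?_) ((le_infDist hPD).2 fun z hz ↦ ?_)
  · -- `x - P x + d` is the point of the fibre `P ⁻¹' {d}` nearest to `x`
    have hlift : P (x - P x + d) = d := by
      rw [map_add, map_sub, orthogonalProjectionOnto_mem_subspace_eq_self,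
        orthogonalProjectionOnto_mem_subspace_eq_self, sub_self, zero_add]
    calc infDist x (P ⁻¹' D) ≤ dist x (x - P x + d) :=
          infDist_le_dist_of_mem (by rwa [mem_preimage, hlift])
      _ = dist (P x) d := by
          rw [dist_eq_norm, dist_eq_norm, Submodule.coe_norm, Submodule.coe_sub]
          congr 1; abel
  · calc infDist (P x) D ≤ dist (P x) (P z) := infDist_le_dist_of_mem hz
      _ ≤ dist x z := (K.lipschitzWith_orthogonalProjectionOnto.dist_le_mul x z).trans_eq (by simp)

end RCLike

theorem preimage_orthogonalProjectionOnto_setOf_inner_le {E : Type*} [NormedAddCommGroup E]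
    [InnerProductSpace ℝ E] (K : Submodule ℝ E) [K.HasOrthogonalProjection] {a : E} (ha : a ∈ K)
    (β : ℝ) :
    K.orthogonalProjectionOnto ⁻¹' {v : K | inner ℝ a (v : E) ≤ β} = {x | inner ℝ a x ≤ β} := by
  ext x
  show inner ℝ (⟨a, ha⟩ : K) (K.orthogonalProjectionOnto x) ≤ β ↔ _
  rw [inner_orthogonalProjectionOnto_eq_of_mem_left]
  rfl

end Submodule

theorem stmt19_general {H : Type*} [NormedAddCommGroup H] [InnerProductSpace ℝ H]
    {m : ℕ} (hm : 0 < m) (a : Fin m → H) (β : Fin m → ℝ)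
    (C : Fin m → Set H) (hC : ∀ i, C i = {x : H | inner ℝ (a i) x ≤ β i})
    (x : ℕ → H) (hb : Bornology.IsBounded (Set.range x))
    (hmax : Filter.Tendsto
      (fun k => Finset.univ.sup' ⟨⟨0, hm⟩, Finset.mem_univ _⟩
        (fun i => Metric.infDist (x k) (C i)))
      Filter.atTop (nhds 0)) :
    Filter.Tendsto (fun k => Metric.infDist (x k) (⋂ i, C i))
      Filter.atTop (nhds 0) := by
  set V := Submodule.span ℝ (range a)
  have : FiniteDimensional ℝ V := FiniteDimensional.span_of_finite ℝ (finite_range a)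
  set P := V.orthogonalProjectionOnto
  set D : Fin m → Set V := fun i ↦ {v | inner ℝ (a i) (v : H) ≤ β i}
  have hCD : ∀ i, C i = P ⁻¹' D i := fun i ↦ (hC i).trans
    (V.preimage_orthogonalProjectionOnto_setOf_inner_le (Submodule.subset_span ⟨i, rfl⟩) _).symm
  have hdist : ∀ k i, infDist (x k) (C i) = infDist (P (x k)) (D i) := fun k i ↦ by
    rw [hCD, V.infDist_preimage_orthogonalProjectionOnto]
  have hdist_iInter : ∀ k, infDist (x k) (⋂ i, C i) = infDist (P (x k)) (⋂ i, D i) := fun k ↦ by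
    rw [iInter_congr hCD, ← preimage_iInter, V.infDist_preimage_orthogonalProjectionOnto]
  simp only [hdist_iInter]
  refine tendsto_infDist_iInter_of_tendsto_infDist
    (fun i ↦ isClosed_le (continuous_const.inner continuous_subtype_val) continuous_const)
    ?_ fun i ↦ ?_
  · rw [range_comp' P x]
    exact V.lipschitzWith_orthogonalProjectionOnto.isBounded_image hb
  · refine squeeze_zero (fun _ ↦ infDist_nonneg) (fun k ↦ ?_) hmax
    exact (hdist k i).symm.trans_le
      (Finset.le_sup' (fun i ↦ infDist (x k) (C i)) (Finset.mem_univ i))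

theorem stmt19 {H : Type*} [NormedAddCommGroup H] [InnerProductSpace ℝ H]
    {m : ℕ} (hm : 0 < m) (a : Fin m → H) (ha : ∀ i, a i ≠ 0) (β : Fin m → ℝ)
    (C : Fin m → Set H) (hC : ∀ i, C i = {x : H | inner ℝ (a i) x ≤ β i})
    (hne : (⋂ i, C i).Nonempty)
    (x : ℕ → H) (hb : Bornology.IsBounded (Set.range x))
    (hmax : Filter.Tendsto
      (fun k => Finset.univ.sup' ⟨⟨0, hm⟩, Finset.mem_univ _⟩
        (fun i => Metric.infDist (x k) (C i)))
      Filter.atTop (nhds 0)) :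
    Filter.Tendsto (fun k => Metric.infDist (x k) (⋂ i, C i))
      Filter.atTop (nhds 0) :=
  stmt19_general hm a β C hC x hb hmax
end
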